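/- arXiv:1811.01111 — 8 statements merged into one kernel-verified Lean document; each statement's English description precedes it below -/
import Mathlib

section
/- Suppose F ⊆ 2^[n] is shifted and r-wise t-intersecting (with r ≥ 2, t ≥ 1). Then the family F(1̄) := {F ∈ F : 1 ∉ F} is r-wise (t + r − 1)-intersecting. -/
/-!
Let `F₁, …, F_r` be members of `F` avoiding `1`, with common part `T`, and take `J ⊆ T` with
`|J| ≤ r - 1`. Shifting `F_i` by `1 ← j_i`, where `j_i` runs over `J` and at least one `F_i` is
left alone, keeps every set in `F` (as `F` is shifted), keeps `1` out of the intersection (via the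
untouched set), and removes `J` from it. So `t ≤ |T| - |J|`; taking `|J| = min (r - 1) |T|` and
using `t ≥ 1` forces `|J| = r - 1`, i.e. `|T| ≥ t + r - 1`.
-/

open Finset

/-- The `(i ← j)` shift of a single set. -/
def shiftSet (i j : ℕ) (A : Finset ℕ) : Finset ℕ :=
  if j ∈ A ∧ i ∉ A then insert i (A.erase j) else A

/-- The `(i ← j)` shift of a family. -/
def shiftFam (i j : ℕ) (𝒜 : Finset (Finset ℕ)) : Finset (Finset ℕ) :=
  𝒜.image (shiftSet i j) ∪ 𝒜.filter (fun A => shiftSet i j A ∈ 𝒜)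

/-- A family of subsets of `[n]` is shifted if it is invariant under all
`(i ← j)` shifts with `1 ≤ i < j ≤ n`. -/
def IsShifted (n : ℕ) (𝒜 : Finset (Finset ℕ)) : Prop :=
  ∀ i j : ℕ, 1 ≤ i → i < j → j ≤ n → shiftFam i j 𝒜 = 𝒜

/-- A family is `r`-wise `t`-intersecting if any `r` of its members
(with repetition) have at least `t` common elements. -/
def RWiseIntersecting (r t : ℕ) (F : Finset (Finset ℕ)) : Prop :=
  ∀ f : Fin r → Finset ℕ, (∀ i, f i ∈ F) → t ≤ (⋂ i, ((f i : Finset ℕ) : Set ℕ)).ncard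

lemma finite_iInter_coe {ι α : Type*} (f : ι → Finset α) (i : ι) :
    (⋂ i, (f i : Set α)).Finite :=
  (f i).finite_toSet.subset (Set.iInter_subset _ i)

lemma exists_fin_surjective_finset {α : Type*} {r : ℕ} {s : Finset α} (hs : s.Nonempty)
    (hr : s.card ≤ r) :
    ∃ σ : Fin r → α, Set.range σ = s := by
  obtain ⟨e⟩ := Function.Embedding.nonempty_of_card_le (α := s) (β := Fin r) (by simpa using hr)
  have : Nonempty s := hs.to_subtype
  refine ⟨Subtype.val ∘ Function.invFun e, ?_⟩
  rw [Set.range_comp, (Function.invFun_surjective e.injective).range_eq, Set.image_univ,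
    Subtype.range_coe]

lemma shiftSet_self (i : ℕ) (A : Finset ℕ) : shiftSet i i A = A := by
  simp [shiftSet]

lemma shiftSet_subset_insert (i j : ℕ) (A : Finset ℕ) : shiftSet i j A ⊆ insert i A := by
  unfold shiftSet
  split_ifs
  · exact insert_subset_insert _ (erase_subset _ _)
  · exact subset_insert _ _

lemma shiftSet_of_mem_of_notMem {i j : ℕ} {A : Finset ℕ} (hj : j ∈ A) (hi : i ∉ A) :
    shiftSet i j A = insert i (A.erase j) :=
  if_pos ⟨hj, hi⟩

lemma IsShifted.shiftSet_mem {n i j : ℕ} {𝒜 : Finset (Finset ℕ)} (h : IsShifted n 𝒜)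
    {A : Finset ℕ} (hA : A ∈ 𝒜) (hi : 1 ≤ i) (hij : i ≤ j) (hj : j ≤ n) :
    shiftSet i j A ∈ 𝒜 := by
  rcases hij.eq_or_lt with rfl | hij
  · rwa [shiftSet_self]
  · rw [← h i j hi hij hj, shiftFam]
    exact mem_union_left _ (mem_image_of_mem _ hA)

/-- The unshifted index `σ i₀ = a` keeps `a` itself out of the new intersection; every other
`σ i` is then removed from `f i` without anything new entering. -/
lemma iInter_shiftSet_subset {ι : Type*} {a : ℕ} {f : ι → Finset ℕ} (hf : ∀ i, a ∉ f i)
    (σ : ι → ℕ) (ha : a ∈ Set.range σ) :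
    (⋂ i, (shiftSet a (σ i) (f i) : Set ℕ)) ⊆ (⋂ i, (f i : Set ℕ)) \ Set.range σ := by
  intro x hx
  simp only [Set.mem_iInter, mem_coe] at hx
  obtain ⟨i₀, hi₀⟩ := ha
  have hxa : x ≠ a := by
    have hx₀ := hx i₀
    rw [hi₀, shiftSet_self] at hx₀
    exact ne_of_mem_of_not_mem hx₀ (hf i₀)
  have hxf : ∀ i, x ∈ f i := fun i =>
    mem_of_mem_insert_of_ne (shiftSet_subset_insert _ _ _ (hx i)) hxa
  refine ⟨Set.mem_iInter.2 hxf, ?_⟩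
  rintro ⟨i, rfl⟩
  have hxi := hx i
  rw [shiftSet_of_mem_of_notMem (hxf i) (hf i), mem_insert] at hxi
  exact hxi.elim hxa (notMem_erase _ _)

/-- Shifting `f i` by `1 ← σ i`, where `σ` runs over `J ∪ {1}`, gives `r` members of `𝒜` whose
intersection misses `J`. -/
lemma RWiseIntersecting.add_card_le_ncard_iInter {n r t : ℕ} {𝒜 : Finset (Finset ℕ)}
    (h𝒜 : ∀ A ∈ 𝒜, A ⊆ Icc 1 n) (hshift : IsShifted n 𝒜) (hint : RWiseIntersecting r t 𝒜)
    {f : Fin r → Finset ℕ} (hf : ∀ i, f i ∈ 𝒜) (hf1 : ∀ i, 1 ∉ f i)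
    {J : Finset ℕ} (hJ : (J : Set ℕ) ⊆ ⋂ i, (f i : Set ℕ)) (hJr : J.card < r) :
    t + J.card ≤ (⋂ i, (f i : Set ℕ)).ncard := by
  let i₀ : Fin r := ⟨0, by omega⟩
  have h1J : 1 ∉ J := fun h => hf1 i₀ (Set.mem_iInter.1 (hJ h) i₀)
  obtain ⟨σ, hσ⟩ := exists_fin_surjective_finset (r := r) (insert_nonempty 1 J)
    (by rw [card_insert_of_notMem h1J]; omega)
  have hσ𝒜 : ∀ i, shiftSet 1 (σ i) (f i) ∈ 𝒜 := by
    intro i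
    rcases mem_insert.1 (mem_coe.1 (hσ ▸ Set.mem_range_self i)) with h | h
    · rw [h, shiftSet_self]
      exact hf i
    · have hσi := mem_Icc.1 (h𝒜 _ (hf i) (Set.mem_iInter.1 (hJ h) i))
      exact hshift.shiftSet_mem (hf i) le_rfl hσi.1 hσi.2
  have hsub : (⋂ i, (shiftSet 1 (σ i) (f i) : Set ℕ)) ⊆ (⋂ i, (f i : Set ℕ)) \ J :=
    (iInter_shiftSet_subset hf1 σ (by simp [hσ])).trans
      (Set.sdiff_subset_sdiff_right (by simp [hσ]))
  have hfin := finite_iInter_coe f i₀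
  calc t + J.card ≤ ((⋂ i, (f i : Set ℕ)) \ J).ncard + (J : Set ℕ).ncard := by
        rw [Set.ncard_coe_finset]
        exact Nat.add_le_add_right ((hint _ hσ𝒜).trans (Set.ncard_le_ncard hsub hfin.sdiff)) _
    _ = (⋂ i, (f i : Set ℕ)).ncard := Set.ncard_sdiff_add_ncard_of_subset hJ hfin

theorem stmt_5 (n r t : ℕ) (hr : 2 ≤ r) (ht : 1 ≤ t)
    (𝒜 : Finset (Finset ℕ)) (h𝒜 : ∀ A ∈ 𝒜, A ⊆ Finset.Icc 1 n)
    (hshift : IsShifted n 𝒜) (hint : RWiseIntersecting r t 𝒜) :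
    RWiseIntersecting r (t + r - 1) (𝒜.filter fun A => 1 ∉ A) := by
  intro f hf
  simp only [mem_filter, forall_and] at hf
  obtain ⟨hf𝒜, hf1⟩ := hf
  have hT := finite_iInter_coe f ⟨0, by omega⟩
  obtain ⟨J, hJT, hJ⟩ := exists_subset_card_eq (s := hT.toFinset)
    ((min_le_right (r - 1) _).trans_eq (Set.ncard_eq_toFinset_card _ hT))
  have := hint.add_card_le_ncard_iInter h𝒜 hshift hf𝒜 hf1 (hT.subset_toFinset.1 hJT) (by omega)
  omega
end

section
/- Let F_1, F_2 ⊆ ([n] choose k) both be shifted families. Then |F_1 ∩ F_2| ≥ |F_1|·|F_2| / C(n,k); that is, any two shifted k-uniform families are positively correlated. -/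
open Finset

theorem isShifted_iff_shiftSet_mem {n : ℕ} {𝒜 : Finset (Finset ℕ)} :
    IsShifted n 𝒜 ↔ ∀ i j, 1 ≤ i → i < j → j ≤ n → ∀ A ∈ 𝒜, shiftSet i j A ∈ 𝒜 := by
  refine forall₅_congr fun i j _ _ _ => ⟨fun h A hA => ?_, fun h => ?_⟩
  · rw [← h]
    exact mem_union_left _ (mem_image_of_mem _ hA)
  · refine Subset.antisymm (fun A hA => ?_) fun A hA => mem_union_right _ (mem_filter.2 ⟨hA, h A hA⟩)
    rcases mem_union.1 hA with hA | hA
    · obtain ⟨B, hB, rfl⟩ := mem_image.1 hA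
      exact h B hB
    · exact (mem_filter.1 hA).1

theorem notMem_shiftSet {i j a : ℕ} {A : Finset ℕ} (hi : i ≠ a) (ha : a ∉ A) :
    a ∉ shiftSet i j A := by
  unfold shiftSet
  split_ifs
  · simp [hi.symm, ha]
  · exact ha

theorem shiftSet_insert_of_ne {i j a : ℕ} {A : Finset ℕ} (hi : i ≠ a) (hj : j ≠ a) :
    shiftSet i j (insert a A) = insert a (shiftSet i j A) := by
  have hcond : (j ∈ insert a A ∧ i ∉ insert a A) ↔ (j ∈ A ∧ i ∉ A) := by
    simp [mem_insert, hi, hj]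
  unfold shiftSet
  rw [if_congr hcond rfl rfl]
  split_ifs
  · rw [erase_insert_of_ne hj.symm, Finset.insert_comm]
  · rfl

theorem shiftSet_insert_self {i j : ℕ} {A : Finset ℕ} (hij : i ≠ j) (hi : i ∉ A) (hj : j ∉ A) :
    shiftSet i j (insert j A) = insert i A := by
  rw [shiftSet, if_pos ⟨mem_insert_self j A, by simp [hij, hi]⟩, erase_insert hj]

theorem nonMemberSubfamily_subset_powersetCard_erase {k a : ℕ} {s : Finset ℕ}
    {𝒜 : Finset (Finset ℕ)} (h : 𝒜 ⊆ s.powersetCard k) :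
    𝒜.nonMemberSubfamily a ⊆ (s.erase a).powersetCard k := by
  intro A hA
  obtain ⟨hA, haA⟩ := mem_nonMemberSubfamily.1 hA
  obtain ⟨hAs, hcard⟩ := mem_powersetCard.1 (h hA)
  exact mem_powersetCard.2 ⟨fun x hx => mem_erase.2 ⟨ne_of_mem_of_not_mem hx haA, hAs hx⟩, hcard⟩

theorem memberSubfamily_subset_powersetCard_erase {k a : ℕ} {s : Finset ℕ}
    {𝒜 : Finset (Finset ℕ)} (h : 𝒜 ⊆ s.powersetCard (k + 1)) :
    𝒜.memberSubfamily a ⊆ (s.erase a).powersetCard k := by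
  intro A hA
  obtain ⟨hA, haA⟩ := mem_memberSubfamily.1 hA
  obtain ⟨hAs, hcard⟩ := mem_powersetCard.1 (h hA)
  refine mem_powersetCard.2 ⟨fun x hx => mem_erase.2 ⟨ne_of_mem_of_not_mem hx haA, ?_⟩, ?_⟩
  · exact hAs (mem_insert_of_mem hx)
  · rwa [card_insert_of_notMem haA, Nat.add_right_cancel_iff] at hcard

theorem Icc_one_erase_succ (n : ℕ) : (Icc 1 (n + 1)).erase (n + 1) = Icc 1 n := by
  rw [Icc_erase_right, Ico_add_one_right_eq_Icc]

namespace IsShifted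

variable {n : ℕ} {𝒜 : Finset (Finset ℕ)}

theorem nonMemberSubfamily (h𝒜 : IsShifted (n + 1) 𝒜) :
    IsShifted n (𝒜.nonMemberSubfamily (n + 1)) := by
  rw [isShifted_iff_shiftSet_mem] at h𝒜 ⊢
  intro i j hi hij hj A hA
  obtain ⟨hA, hnA⟩ := mem_nonMemberSubfamily.1 hA
  exact mem_nonMemberSubfamily.2
    ⟨h𝒜 i j hi hij (by omega) A hA, notMem_shiftSet (by omega) hnA⟩

theorem memberSubfamily (h𝒜 : IsShifted (n + 1) 𝒜) :
    IsShifted n (𝒜.memberSubfamily (n + 1)) := by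
  rw [isShifted_iff_shiftSet_mem] at h𝒜 ⊢
  intro i j hi hij hj A hA
  obtain ⟨hA, hnA⟩ := mem_memberSubfamily.1 hA
  refine mem_memberSubfamily.2 ⟨?_, notMem_shiftSet (by omega) hnA⟩
  rw [← shiftSet_insert_of_ne (by omega) (by omega)]
  exact h𝒜 i j hi hij (by omega) _ hA

theorem insert_mem_nonMemberSubfamily (h𝒜 : IsShifted (n + 1) 𝒜) {A : Finset ℕ}
    (hA : A ∈ 𝒜.memberSubfamily (n + 1)) {i : ℕ} (hi : i ∈ Icc 1 n \ A) :
    insert i A ∈ 𝒜.nonMemberSubfamily (n + 1) := by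
  obtain ⟨hA, hnA⟩ := mem_memberSubfamily.1 hA
  obtain ⟨hi, hiA⟩ := mem_sdiff.1 hi
  obtain ⟨hi₁, hin⟩ := mem_Icc.1 hi
  refine mem_nonMemberSubfamily.2 ⟨?_, by simp [hnA, show n + 1 ≠ i by omega]⟩
  rw [← shiftSet_insert_self (by omega) hiA hnA]
  exact isShifted_iff_shiftSet_mem.1 h𝒜 i (n + 1) hi₁ (by omega) le_rfl _ hA

-- Double counting the pairs `A ⊆ B`: each link set `A` lies in the `n - k` sets `insert i A`,
-- and each `(k + 1)`-set `B` contains at most `k + 1` link sets.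
theorem card_memberSubfamily_mul_le {k : ℕ} (h𝒜 : IsShifted (n + 1) 𝒜)
    (hk : 𝒜 ⊆ (Icc 1 (n + 1)).powersetCard (k + 1)) :
    #(𝒜.memberSubfamily (n + 1)) * (n - k) ≤ #(𝒜.nonMemberSubfamily (n + 1)) * (k + 1) := by
  have hℳ := memberSubfamily_subset_powersetCard_erase (a := n + 1) hk
  rw [Icc_one_erase_succ] at hℳ
  refine card_mul_le_card_mul (· ⊆ ·) (fun A hA => ?_) fun B hB => ?_
  · obtain ⟨hAn, hcard⟩ := mem_powersetCard.1 (hℳ hA)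
    calc n - k = #(Icc 1 n \ A) := by simp [card_sdiff_of_subset hAn, hcard]
      _ ≤ _ := card_le_card_of_injOn (insert · A)
          (fun i hi => (mem_bipartiteAbove _).2
            ⟨h𝒜.insert_mem_nonMemberSubfamily hA hi, subset_insert i A⟩)
          fun i hi j _ hij => (insert_inj (mem_sdiff.1 hi).2).1 hij
  · calc #((𝒜.memberSubfamily (n + 1)).bipartiteBelow (· ⊆ ·) B) ≤ #(B.powersetCard k) := by
          refine card_le_card fun A hA => ?_
          obtain ⟨hA, hAB⟩ := (mem_bipartiteBelow _).1 hA
          exact mem_powersetCard.2 ⟨hAB, (mem_powersetCard.1 (hℳ hA)).2⟩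
      _ = k + 1 := by
          rw [card_powersetCard, (mem_powersetCard.1 (hk (mem_nonMemberSubfamily.1 hB).1)).2,
            Nat.choose_succ_self_right]

theorem card_memberSubfamily_mul_choose_le {k : ℕ} (h𝒜 : IsShifted (n + 1) 𝒜)
    (hk : 𝒜 ⊆ (Icc 1 (n + 1)).powersetCard (k + 1)) :
    #(𝒜.memberSubfamily (n + 1)) * n.choose (k + 1) ≤
      #(𝒜.nonMemberSubfamily (n + 1)) * n.choose k := by
  refine Nat.le_of_mul_le_mul_right ?_ k.add_one_pos
  calc #(𝒜.memberSubfamily (n + 1)) * n.choose (k + 1) * (k + 1)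
      = #(𝒜.memberSubfamily (n + 1)) * (n - k) * n.choose k := by
        rw [mul_assoc, Nat.choose_succ_right_eq]; ring
    _ ≤ #(𝒜.nonMemberSubfamily (n + 1)) * (k + 1) * n.choose k :=
        Nat.mul_le_mul_right _ (h𝒜.card_memberSubfamily_mul_le hk)
    _ = _ := by ring

end IsShifted

theorem Nat.add_mul_add_le_of_chebyshev {a₁ a₂ b₁ b₂ x y p q : ℕ} (hp : 0 < p) (hq : 0 < q)
    (h₁ : b₁ * p ≤ a₁ * q) (h₂ : b₂ * p ≤ a₂ * q) (hx : a₁ * a₂ ≤ x * p) (hy : b₁ * b₂ ≤ y * q) :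
    (b₁ + a₁) * (b₂ + a₂) ≤ (y + x) * (q + p) := by
  -- After scaling by `p * q`, the slack is `(a₁ q - b₁ p) (a₂ q - b₂ p) = d₁ d₂ ≥ 0`.
  obtain ⟨d₁, hd₁⟩ := Nat.exists_eq_add_of_le h₁
  obtain ⟨d₂, hd₂⟩ := Nat.exists_eq_add_of_le h₂
  refine Nat.le_of_mul_le_mul_right (c := p * q) ?_ (Nat.mul_pos hp hq)
  nlinarith [Nat.mul_le_mul_right (q * (q + p)) hx, Nat.mul_le_mul_right (p * (q + p)) hy,
    Nat.zero_le (d₁ * d₂)]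

theorem card_mul_card_le_card_inter_mul_of_card_le_one {α : Type*} [DecidableEq α]
    {𝒮 F₁ F₂ : Finset α} (h𝒮 : #𝒮 ≤ 1) (h₁ : F₁ ⊆ 𝒮) (h₂ : F₂ ⊆ 𝒮) :
    #F₁ * #F₂ ≤ #(F₁ ∩ F₂) * #𝒮 := by
  obtain h𝒮 | ⟨s, rfl⟩ := Nat.le_one_iff_eq_zero_or_eq_one.1 h𝒮 |>.imp card_eq_zero.1 card_eq_one.1
  · simp [subset_empty.1 (h𝒮 ▸ h₁)]
  · rcases subset_singleton_iff.1 h₁ with rfl | rfl <;>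
      rcases subset_singleton_iff.1 h₂ with rfl | rfl <;> simp

theorem Nat.choose_le_one_of_eq_zero_or_le {n k : ℕ} (h : k = 0 ∨ n ≤ k) : n.choose k ≤ 1 := by
  rcases h with rfl | h
  · simp
  · rcases h.eq_or_lt with rfl | h
    · simp
    · simp [Nat.choose_eq_zero_of_lt h]

theorem card_powersetCard_Icc_one (n k : ℕ) : #((Icc 1 n).powersetCard k) = n.choose k := by
  simp

theorem card_mul_card_le_card_inter_mul_choose_of_eq_zero_or_le {n k : ℕ}
    {F₁ F₂ : Finset (Finset ℕ)} (hk : k = 0 ∨ n ≤ k)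
    (h₁ : F₁ ⊆ (Icc 1 n).powersetCard k) (h₂ : F₂ ⊆ (Icc 1 n).powersetCard k) :
    #F₁ * #F₂ ≤ #(F₁ ∩ F₂) * n.choose k := by
  rw [← card_powersetCard_Icc_one]
  exact card_mul_card_le_card_inter_mul_of_card_le_one
    ((card_powersetCard_Icc_one n k).trans_le (Nat.choose_le_one_of_eq_zero_or_le hk)) h₁ h₂

theorem IsShifted.card_mul_card_le_card_inter_mul_choose {n k : ℕ} {F₁ F₂ : Finset (Finset ℕ)}
    (hs₁ : IsShifted n F₁) (hs₂ : IsShifted n F₂)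
    (h₁ : F₁ ⊆ (Icc 1 n).powersetCard k) (h₂ : F₂ ⊆ (Icc 1 n).powersetCard k) :
    #F₁ * #F₂ ≤ #(F₁ ∩ F₂) * n.choose k := by
  induction n generalizing k F₁ F₂ with
  | zero => exact card_mul_card_le_card_inter_mul_choose_of_eq_zero_or_le (.inr k.zero_le) h₁ h₂
  | succ n ih =>
    rcases k with _ | k
    · exact card_mul_card_le_card_inter_mul_choose_of_eq_zero_or_le (.inl rfl) h₁ h₂
    rcases le_or_gt n k with hnk | hkn
    · exact card_mul_card_le_card_inter_mul_choose_of_eq_zero_or_le (.inr (by omega)) h₁ h₂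
    have hdel {F : Finset (Finset ℕ)} (h : F ⊆ (Icc 1 (n + 1)).powersetCard (k + 1)) :=
      Icc_one_erase_succ n ▸ nonMemberSubfamily_subset_powersetCard_erase (a := n + 1) h
    have hlink {F : Finset (Finset ℕ)} (h : F ⊆ (Icc 1 (n + 1)).powersetCard (k + 1)) :=
      Icc_one_erase_succ n ▸ memberSubfamily_subset_powersetCard_erase (a := n + 1) h
    rw [← card_memberSubfamily_add_card_nonMemberSubfamily (n + 1) F₁,
      ← card_memberSubfamily_add_card_nonMemberSubfamily (n + 1) F₂,
      ← card_memberSubfamily_add_card_nonMemberSubfamily (n + 1) (F₁ ∩ F₂), memberSubfamily_inter,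
      nonMemberSubfamily_inter, Nat.choose_succ_succ']
    exact Nat.add_mul_add_le_of_chebyshev (Nat.choose_pos hkn) (Nat.choose_pos hkn.le)
      (hs₁.card_memberSubfamily_mul_choose_le h₁) (hs₂.card_memberSubfamily_mul_choose_le h₂)
      (ih hs₁.nonMemberSubfamily hs₂.nonMemberSubfamily (hdel h₁) (hdel h₂))
      (ih hs₁.memberSubfamily hs₂.memberSubfamily (hlink h₁) (hlink h₂))

theorem stmt_8 (n k : ℕ) (F₁ F₂ : Finset (Finset ℕ))
    (h₁ : F₁ ⊆ (Finset.Icc 1 n).powersetCard k)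
    (h₂ : F₂ ⊆ (Finset.Icc 1 n).powersetCard k)
    (hs₁ : IsShifted n F₁) (hs₂ : IsShifted n F₂) :
    (F₁.card : ℝ) * (F₂.card : ℝ) / (n.choose k : ℝ) ≤ ((F₁ ∩ F₂).card : ℝ) :=
  div_le_of_le_mul₀ (Nat.cast_nonneg _) (Nat.cast_nonneg _) <| by
    exact_mod_cast hs₁.card_mul_card_le_card_inter_mul_choose hs₂ h₁ h₂
end

section
/- Let n ≥ a + b. If A ⊆ ([n] choose a) and B ⊆ ([n] choose b) are cross-intersecting and |A| ≥ C(x, n-a) for some real number x with n − a ≤ x ≤ n, then |B| ≤ C(n, b) − C(x, b). -/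
open Finset

/-- Generalized binomial coefficient `C(x,k)` for real `x`. -/
noncomputable def genBinom (x : ℝ) (k : ℕ) : ℝ :=
  if (k : ℝ) ≤ x then (∏ i ∈ Finset.range k, (x - (i : ℝ))) / (Nat.factorial k : ℝ) else 0

/-!
Taking complements in `[n]`, the family `𝒟 = {[n] \ A : A ∈ 𝒜}` is `(n - a)`-uniform with
`|𝒟| = |𝒜| ≥ C(x, n - a)`. A `b`-set in the `(n - a - b)`-fold shadow of `𝒟` lies in some `[n] \ A`,
so it misses `A` and cannot belong to `ℬ`; hence `|ℬ| ≤ C(n, b) - |∂^(n-a-b) 𝒟|`, and Lovász's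
real-valued form of Kruskal–Katona, `|𝒟| ≥ C(x, r + 1) → |∂ 𝒟| ≥ C(x, r)`, iterated, gives
`|∂^(n-a-b) 𝒟| ≥ C(x, b)`.

Lovász's bound is proved for shifted families by splitting `𝒟` at its least ground element `k`
into the link `ℒ` (members through `k`, with `k` removed) and the rest `ℛ`. Then
`|∂ 𝒟| ≥ |ℒ| + |∂ ℒ|`, shiftedness gives `∂ ℛ ⊆ ℒ`, and Pascal's rule
`C(x, r + 1) = C(x - 1, r) + C(x - 1, r + 1)` lets an induction on `r` and `|𝒟|` go through.
UV-compressions reduce the general case to shifted families.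
-/

open Polynomial
open scoped FinsetFamily

namespace Ring

theorem choose_eq_descPochhammer_eval_div {K : Type*} [Field K] [CharZero K] (x : K) (k : ℕ) :
    choose x k = (descPochhammer K k).eval x / k.factorial := by
  rw [choose_eq_smul, smul_eq_mul, inv_mul_eq_div, descPochhammer_smeval_eq_ascPochhammer,
    ascPochhammer_smeval_eq_eval, descPochhammer_eval_eq_ascPochhammer]

variable {K : Type*} [Field K] [LinearOrder K] [IsStrictOrderedRing K]

theorem choose_nonneg {x : K} {k : ℕ} (h : (k : K) - 1 ≤ x) : 0 ≤ choose x k := by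
  rw [choose_eq_descPochhammer_eval_div]
  exact div_nonneg (descPochhammer_nonneg h) (by positivity)

theorem choose_le_choose {x y : K} {k : ℕ} (h : (k : K) - 1 ≤ x) (hxy : x ≤ y) :
    choose x k ≤ choose y k := by
  rw [choose_eq_descPochhammer_eval_div, choose_eq_descPochhammer_eval_div]
  gcongr
  exact monotoneOn_descPochhammer_eval k h (h.trans hxy) hxy

theorem one_le_choose {x : K} {k : ℕ} (h : (k : K) ≤ x) : 1 ≤ choose x k := by
  simpa [choose_natCast] using choose_le_choose (sub_le_self (k : K) zero_le_one) h

theorem choose_succ_eq_sub_one_add (x : K) (k : ℕ) :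
    choose x (k + 1) = choose (x - 1) k + choose (x - 1) (k + 1) := by
  simpa using choose_succ_succ (x - 1) k

end Ring

namespace Finset

variable {α : Type*} [DecidableEq α] {𝒜 : Finset (Finset α)} {s : Finset α} {r : ℕ}

theorem card_le_card_shadow_of_mem (hs : s ∈ 𝒜) : #s ≤ #(∂ 𝒜) :=
  card_le_card_of_injOn s.erase (fun _ ha ↦ erase_mem_shadow hs ha) (erase_injOn s)

theorem memberSubfamily_subset_nonMemberSubfamily_shadow (a : α) (𝒜 : Finset (Finset α)) :
    𝒜.memberSubfamily a ⊆ (∂ 𝒜).nonMemberSubfamily a := by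
  intro s hs
  obtain ⟨hs, ha⟩ := mem_memberSubfamily.1 hs
  exact mem_nonMemberSubfamily.2 ⟨mem_shadow_iff_insert_mem.2 ⟨a, ha, hs⟩, ha⟩

theorem shadow_memberSubfamily_subset (a : α) (𝒜 : Finset (Finset α)) :
    ∂ (𝒜.memberSubfamily a) ⊆ (∂ 𝒜).memberSubfamily a := by
  intro t ht
  obtain ⟨s, hs, b, hb, rfl⟩ := mem_shadow_iff.1 ht
  obtain ⟨hs, ha⟩ := mem_memberSubfamily.1 hs
  have hab : a ≠ b := by rintro rfl; exact ha hb
  refine mem_memberSubfamily.2 ⟨?_, fun h ↦ ha (mem_of_mem_erase h)⟩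
  rw [← erase_insert_of_ne hab]
  exact erase_mem_shadow hs (mem_insert_of_mem hb)

theorem card_memberSubfamily_add_card_shadow_le (a : α) (𝒜 : Finset (Finset α)) :
    #(𝒜.memberSubfamily a) + #(∂ (𝒜.memberSubfamily a)) ≤ #(∂ 𝒜) := by
  rw [← card_memberSubfamily_add_card_nonMemberSubfamily a (∂ 𝒜), add_comm]
  exact add_le_add (card_le_card (shadow_memberSubfamily_subset a 𝒜))
    (card_le_card (memberSubfamily_subset_nonMemberSubfamily_shadow a 𝒜))

theorem _root_.Set.Sized.memberSubfamily (a : α) (h𝒜 : (𝒜 : Set (Finset α)).Sized (r + 1)) :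
    (𝒜.memberSubfamily a : Set (Finset α)).Sized r := by
  intro s hs
  obtain ⟨hs, ha⟩ := mem_memberSubfamily.1 hs
  simpa [card_insert_of_notMem ha] using h𝒜 hs

theorem _root_.Set.Sized.nonMemberSubfamily (a : α) (h𝒜 : (𝒜 : Set (Finset α)).Sized r) :
    (𝒜.nonMemberSubfamily a : Set (Finset α)).Sized r :=
  h𝒜.mono (coe_subset.2 (filter_subset _ _))

end Finset

structure IsShiftedFrom (k : ℕ) (𝒜 : Finset (Finset ℕ)) : Prop where
  le_of_mem : ∀ ⦃s⦄, s ∈ 𝒜 → ∀ ⦃i⦄, i ∈ s → k ≤ i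
  insert_erase_mem :
    ∀ ⦃s i j⦄, s ∈ 𝒜 → k ≤ i → i < j → i ∉ s → j ∈ s → insert i (s.erase j) ∈ 𝒜

namespace IsShiftedFrom

variable {k : ℕ} {𝒜 : Finset (Finset ℕ)}

theorem memberSubfamily (h : IsShiftedFrom k 𝒜) : IsShiftedFrom (k + 1) (𝒜.memberSubfamily k) where
  le_of_mem s hs i hi := by
    obtain ⟨hs, hk⟩ := mem_memberSubfamily.1 hs
    have := h.le_of_mem hs (mem_insert_of_mem hi)
    have : i ≠ k := by rintro rfl; exact hk hi
    omega
  insert_erase_mem s i j hs hki hij his hjs := by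
    obtain ⟨hs, hk⟩ := mem_memberSubfamily.1 hs
    have hmem := h.insert_erase_mem hs (by omega) hij (by simp [his]; omega)
      (mem_insert_of_mem hjs)
    rw [erase_insert_of_ne (by omega), Finset.insert_comm] at hmem
    exact mem_memberSubfamily.2 ⟨hmem, by simp [hk]; omega⟩

theorem nonMemberSubfamily (h : IsShiftedFrom k 𝒜) :
    IsShiftedFrom (k + 1) (𝒜.nonMemberSubfamily k) where
  le_of_mem s hs i hi := by
    obtain ⟨hs, hk⟩ := mem_nonMemberSubfamily.1 hs
    have := h.le_of_mem hs hi
    have : i ≠ k := by rintro rfl; exact hk hi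
    omega
  insert_erase_mem s i j hs hki hij his hjs := by
    obtain ⟨hs, hk⟩ := mem_nonMemberSubfamily.1 hs
    refine mem_nonMemberSubfamily.2 ⟨h.insert_erase_mem hs (by omega) hij his hjs, ?_⟩
    simp only [mem_insert, mem_erase, not_or]
    exact ⟨by omega, fun h ↦ hk h.2⟩

theorem shadow_nonMemberSubfamily_subset (h : IsShiftedFrom k 𝒜) :
    ∂ (𝒜.nonMemberSubfamily k) ⊆ 𝒜.memberSubfamily k := by
  intro t ht
  obtain ⟨s, hs, j, hj, rfl⟩ := mem_shadow_iff.1 ht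
  obtain ⟨hs, hk⟩ := mem_nonMemberSubfamily.1 hs
  have hkj : k < j := lt_of_le_of_ne (h.le_of_mem hs hj) (by rintro rfl; exact hk hj)
  exact mem_memberSubfamily.2
    ⟨h.insert_erase_mem hs le_rfl hkj hk hj, fun h ↦ hk (mem_of_mem_erase h)⟩

theorem le_card_memberSubfamily {r : ℕ} (h : IsShiftedFrom k 𝒜)
    (h𝒜 : (𝒜 : Set (Finset ℕ)).Sized r) (hne : (𝒜.nonMemberSubfamily k).Nonempty) :
    r ≤ #(𝒜.memberSubfamily k) := by
  obtain ⟨s, hs⟩ := hne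
  rw [← h𝒜.nonMemberSubfamily k hs]
  exact (card_le_card_shadow_of_mem hs).trans (card_le_card h.shadow_nonMemberSubfamily_subset)

theorem choose_le_card_shadow {r : ℕ} (h : IsShiftedFrom k 𝒜)
    (h𝒜 : (𝒜 : Set (Finset ℕ)).Sized (r + 1)) {x : ℝ} (hx : (r : ℝ) + 1 ≤ x)
    (hcard : Ring.choose x (r + 1) ≤ #𝒜) : Ring.choose x r ≤ #(∂ 𝒜) := by
  induction r generalizing k 𝒜 x with
  | zero =>
    obtain ⟨s, hs⟩ : 𝒜.Nonempty := by
      rw [← card_pos, ← Nat.cast_pos (α := ℝ)]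
      exact (zero_lt_one.trans_le (Ring.one_le_choose (by simpa using hx))).trans_le hcard
    have := card_le_card_shadow_of_mem hs
    rw [h𝒜 hs] at this
    simpa [Ring.choose_zero_right] using this
  | succ r ih =>
    induction 𝒜 using Finset.strongInduction generalizing k x with | H 𝒜 ih𝒜 => ?_
    push_cast at hx
    set ℒ := 𝒜.memberSubfamily k
    set ℛ := 𝒜.nonMemberSubfamily k
    have hsplit : #ℒ + #ℛ = #𝒜 := card_memberSubfamily_add_card_nonMemberSubfamily k 𝒜
    by_cases hℒ : Ring.choose (x - 1) (r + 1) ≤ #ℒ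
    · have hℒshadow := ih h.memberSubfamily (h𝒜.memberSubfamily k) (by linarith) hℒ
      have hshadow : (#ℒ : ℝ) + #(∂ ℒ) ≤ #(∂ 𝒜) := by
        exact_mod_cast card_memberSubfamily_add_card_shadow_le k 𝒜
      rw [Ring.choose_succ_eq_sub_one_add]
      linarith
    -- Otherwise `ℛ` is large, and `∂ ℛ ⊆ ℒ` makes `ℒ` large after all: by induction on `|𝒜|`
    -- when `x ≥ r + 3`, and because a single member of `ℛ` already has `r + 2` shadows otherwise.
    exfalso
    have hℛ : Ring.choose (x - 1) (r + 2) < #ℛ := by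
      have hpascal := Ring.choose_succ_eq_sub_one_add x (r + 1)
      have hsplit' : (#ℒ : ℝ) + #ℛ = #𝒜 := by exact_mod_cast hsplit
      linarith
    have hℛne : ℛ.Nonempty := by
      rw [← card_pos, ← Nat.cast_pos (α := ℝ)]
      exact (Ring.choose_nonneg (by push_cast; linarith)).trans_lt hℛ
    have hrℒ : r + 2 ≤ #ℒ := h.le_card_memberSubfamily h𝒜 hℛne
    rcases le_or_gt ((r : ℝ) + 3) x with hx3 | hx3
    · have hℛ𝒜 : ℛ ⊂ 𝒜 := (filter_subset _ _).ssubset_of_ne fun h𝒜ℛ ↦ by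
        have : #ℛ = #𝒜 := congrArg card h𝒜ℛ
        omega
      have hℛshadow := ih𝒜 ℛ hℛ𝒜 h.nonMemberSubfamily (h𝒜.nonMemberSubfamily k)
        (x := x - 1) (by push_cast; linarith) hℛ.le
      have hℛℒ : (#(∂ ℛ) : ℝ) ≤ #ℒ := by
        exact_mod_cast card_le_card h.shadow_nonMemberSubfamily_subset
      linarith
    · have hchoose := Ring.choose_le_choose (k := r + 1) (x := x - 1) (y := ((r + 2 : ℕ) : ℝ))
        (by push_cast; linarith) (by push_cast; linarith)
      rw [Ring.choose_natCast, Nat.choose_succ_self_right] at hchoose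
      have hrℒ' : ((r + 2 : ℕ) : ℝ) ≤ #ℒ := by exact_mod_cast hrℒ
      linarith

end IsShiftedFrom

open UV in
theorem isShiftedFrom_zero_of_isCompressed {𝒜 : Finset (Finset ℕ)}
    (h : ∀ i j : ℕ, i < j → IsCompressed {i} {j} 𝒜) : IsShiftedFrom 0 𝒜 where
  le_of_mem _ _ i _ := i.zero_le
  insert_erase_mem s i j hs _ hij his hjs := by
    have hcompress : compress {i} {j} s = insert i (s.erase j) := by
      rw [compress, if_pos ⟨disjoint_singleton_left.2 his, singleton_subset_iff.2 hjs⟩,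
        sup_eq_union, sdiff_singleton_eq_erase, union_comm, ← insert_eq, erase_insert_of_ne hij.ne]
    simpa [hcompress, (h i j hij).eq] using compress_mem_compression (u := {i}) (v := {j}) hs

def binaryWeight (𝒜 : Finset (Finset ℕ)) : ℕ := ∑ s ∈ 𝒜, ∑ i ∈ s, 2 ^ i

open UV in
theorem binaryWeight_compression_lt {i j : ℕ} (hij : i < j) {𝒜 : Finset (Finset ℕ)}
    (h : 𝓒 {i} {j} 𝒜 ≠ 𝒜) : binaryWeight (𝓒 {i} {j} 𝒜) < binaryWeight 𝒜 := by
  rw [compression] at h ⊢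
  have hmoved : ∀ s ∈ {s ∈ 𝒜 | compress {i} {j} s ∉ 𝒜}, compress {i} {j} s ≠ s := by
    intro s hs hcs
    rw [mem_filter, hcs] at hs
    exact hs.2 hs.1
  have hsplit : {s ∈ 𝒜 | compress {i} {j} s ∈ 𝒜} ∪ {s ∈ 𝒜 | compress {i} {j} s ∉ 𝒜} = 𝒜 :=
    filter_union_filter_not_eq _ _
  have hne : {s ∈ 𝒜 | compress {i} {j} s ∉ 𝒜}.Nonempty := by
    refine nonempty_iff_ne_empty.2 fun hempty ↦ h ?_
    rw [filter_image, hempty, image_empty, union_empty]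
    rwa [hempty, union_empty] at hsplit
  rw [binaryWeight, binaryWeight, sum_union compress_disjoint]
  conv_rhs => rw [← hsplit]
  rw [sum_union (disjoint_filter_filter_not _ _ _), add_lt_add_iff_left, filter_image,
    sum_image compress_injOn]
  refine sum_lt_sum_of_nonempty hne fun s hs ↦ ?_
  rw [geomSum_lt_geomSum_iff_toColex_lt_toColex le_rfl]
  exact toColex_compress_lt_toColex (hU := singleton_nonempty i) (hV := singleton_nonempty j)
    (by simpa using hij) (hmoved s hs)

open UV in
theorem exists_isShiftedFrom_zero {r : ℕ} (𝒜 : Finset (Finset ℕ))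
    (h𝒜 : (𝒜 : Set (Finset ℕ)).Sized r) :
    ∃ ℬ : Finset (Finset ℕ), #ℬ = #𝒜 ∧ #(∂ ℬ) ≤ #(∂ 𝒜) ∧ (ℬ : Set (Finset ℕ)).Sized r ∧
      IsShiftedFrom 0 ℬ := by
  by_cases hcompressed : ∀ i j : ℕ, i < j → IsCompressed {i} {j} 𝒜
  · exact ⟨𝒜, rfl, le_rfl, h𝒜, isShiftedFrom_zero_of_isCompressed hcompressed⟩
  push Not at hcompressed
  obtain ⟨i, j, hij, hnot⟩ := hcompressed
  have := binaryWeight_compression_lt hij hnot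
  obtain ⟨ℬ, hcard, hshadow, hℬ, hshifted⟩ :=
    exists_isShiftedFrom_zero (𝓒 {i} {j} 𝒜) (h𝒜.uvCompression (by simp))
  refine ⟨ℬ, hcard.trans (card_compression _ _ _), hshadow.trans ?_, hℬ, hshifted⟩
  refine card_shadow_compression_le _ _ fun i' hi' ↦ ⟨j, mem_singleton_self j, ?_⟩
  rw [mem_singleton.1 hi', erase_singleton, erase_singleton]
  exact isCompressed_self _ _
termination_by binaryWeight 𝒜

theorem choose_le_card_shadow {r : ℕ} {𝒜 : Finset (Finset ℕ)}
    (h𝒜 : (𝒜 : Set (Finset ℕ)).Sized (r + 1)) {x : ℝ} (hx : (r : ℝ) + 1 ≤ x)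
    (hcard : Ring.choose x (r + 1) ≤ #𝒜) : Ring.choose x r ≤ #(∂ 𝒜) := by
  obtain ⟨ℬ, hcardℬ, hshadow, hℬ, hshifted⟩ := exists_isShiftedFrom_zero 𝒜 h𝒜
  calc Ring.choose x r ≤ #(∂ ℬ) := hshifted.choose_le_card_shadow hℬ hx (hcardℬ ▸ hcard)
    _ ≤ #(∂ 𝒜) := by exact_mod_cast hshadow

theorem choose_le_card_shadow_iterate {r i : ℕ} {𝒜 : Finset (Finset ℕ)}
    (h𝒜 : (𝒜 : Set (Finset ℕ)).Sized r) (hir : i ≤ r) {x : ℝ} (hx : (r : ℝ) ≤ x)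
    (hcard : Ring.choose x r ≤ #𝒜) : Ring.choose x (r - i) ≤ #(∂^[i] 𝒜) := by
  induction i with
  | zero => simpa using hcard
  | succ i ih =>
    obtain ⟨m, hm⟩ : ∃ m, r - i = m + 1 := ⟨r - i - 1, by omega⟩
    rw [Function.iterate_succ_apply', show r - (i + 1) = m by omega]
    refine choose_le_card_shadow (hm ▸ h𝒜.shadow_iterate) ?_ (hm ▸ ih (by omega))
    have : (m : ℝ) + 1 ≤ r := by exact_mod_cast hm ▸ r.sub_le i
    linarith

namespace Finset

variable {α : Type*} [DecidableEq α] {s : Finset α} {𝒜 ℬ : Finset (Finset α)} {a b : ℕ}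

theorem card_image_sdiff (h𝒜 : ∀ A ∈ 𝒜, A ⊆ s) : #(𝒜.image (s \ ·)) = #𝒜 :=
  card_image_of_injOn fun A hA B hB hAB ↦ by
    rw [← sdiff_sdiff_eq_self (h𝒜 A hA), ← sdiff_sdiff_eq_self (h𝒜 B hB)]
    exact congrArg (s \ ·) hAB

theorem sized_image_sdiff (h𝒜 : 𝒜 ⊆ s.powersetCard a) :
    (𝒜.image (s \ ·) : Set (Finset α)).Sized (#s - a) := by
  intro D hD
  obtain ⟨A, hA, rfl⟩ := mem_image.1 hD
  obtain ⟨hAs, hAcard⟩ := mem_powersetCard.1 (h𝒜 hA)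
  rw [card_sdiff_of_subset hAs, hAcard]

theorem card_add_card_shadow_iterate_image_sdiff_le (h𝒜 : 𝒜 ⊆ s.powersetCard a)
    (hℬ : ℬ ⊆ s.powersetCard b) (hcross : ∀ A ∈ 𝒜, ∀ B ∈ ℬ, (A ∩ B).Nonempty)
    (hab : a + b ≤ #s) :
    #ℬ + #(∂^[#s - a - b] (𝒜.image (s \ ·))) ≤ (#s).choose b := by
  set 𝒮 := ∂^[#s - a - b] (𝒜.image (s \ ·))
  have hsub : ∀ S ∈ 𝒮, ∃ A ∈ 𝒜, S ⊆ s \ A := by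
    intro S hS
    obtain ⟨D, hD, hSD, -⟩ := mem_shadow_iterate_iff_exists_sdiff.1 hS
    obtain ⟨A, hA, rfl⟩ := mem_image.1 hD
    exact ⟨A, hA, hSD⟩
  have h𝒮 : 𝒮 ⊆ s.powersetCard b := by
    intro S hS
    obtain ⟨A, -, hSA⟩ := hsub S hS
    refine mem_powersetCard.2 ⟨hSA.trans sdiff_subset, ?_⟩
    rw [(sized_image_sdiff h𝒜).shadow_iterate hS]
    omega
  have hdisj : Disjoint ℬ 𝒮 := by
    refine disjoint_left.2 fun B hB hB𝒮 ↦ ?_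
    obtain ⟨A, hA, hBA⟩ := hsub B hB𝒮
    obtain ⟨i, hi⟩ := hcross A hA B hB
    exact (mem_sdiff.1 (hBA (mem_inter.1 hi).2)).2 (mem_inter.1 hi).1
  rw [← card_union_of_disjoint hdisj, ← card_powersetCard]
  exact card_le_card (union_subset hℬ h𝒮)

end Finset

theorem genBinom_eq_choose {x : ℝ} {k : ℕ} (h : (k : ℝ) ≤ x) : genBinom x k = Ring.choose x k := by
  rw [genBinom, if_pos h, Ring.choose_eq_descPochhammer_eval_div, descPochhammer_eval_eq_prod_range]

theorem stmt_9_general (a b n : ℕ) (hn : a + b ≤ n)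
    (𝒜 ℬ : Finset (Finset ℕ))
    (h𝒜 : 𝒜 ⊆ (Finset.Icc 1 n).powersetCard a)
    (hℬ : ℬ ⊆ (Finset.Icc 1 n).powersetCard b)
    (hcross : ∀ A ∈ 𝒜, ∀ B ∈ ℬ, (A ∩ B).Nonempty)
    (x : ℝ) (hx1 : (n : ℝ) - a ≤ x)
    (hA : genBinom x (n - a) ≤ (𝒜.card : ℝ)) :
    (ℬ.card : ℝ) ≤ (n.choose b : ℝ) - genBinom x b := by
  have hn' : #(Icc 1 n) = n := by simp
  have hxna : ((n - a : ℕ) : ℝ) ≤ x := by rwa [Nat.cast_sub (by omega)]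
  have hxb : (b : ℝ) ≤ x := hxna.trans' (by exact_mod_cast (by omega : b ≤ n - a))
  set 𝒮 := ∂^[n - a - b] (𝒜.image (Icc 1 n \ ·))
  have h𝒮 : Ring.choose x b ≤ #𝒮 := by
    have h𝒜' : #(𝒜.image (Icc 1 n \ ·)) = #𝒜 :=
      card_image_sdiff fun A hA ↦ (mem_powersetCard.1 (h𝒜 hA)).1
    have := choose_le_card_shadow_iterate (hn' ▸ sized_image_sdiff h𝒜) (i := n - a - b)
      (by omega) hxna (by rwa [h𝒜', ← genBinom_eq_choose hxna])
    rwa [show n - a - (n - a - b) = b by omega] at this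
  have hbound := card_add_card_shadow_iterate_image_sdiff_le h𝒜 hℬ hcross (by rwa [hn'])
  rw [hn'] at hbound
  have : (#ℬ : ℝ) + #𝒮 ≤ n.choose b := by exact_mod_cast hbound
  rw [genBinom_eq_choose hxb]
  linarith

theorem stmt_9 (a b n : ℕ) (hn : a + b ≤ n)
    (𝒜 ℬ : Finset (Finset ℕ))
    (h𝒜 : 𝒜 ⊆ (Finset.Icc 1 n).powersetCard a)
    (hℬ : ℬ ⊆ (Finset.Icc 1 n).powersetCard b)
    (hcross : ∀ A ∈ 𝒜, ∀ B ∈ ℬ, (A ∩ B).Nonempty)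
    (x : ℝ) (hx1 : (n : ℝ) - a ≤ x) (hx2 : x ≤ (n : ℝ))
    (hA : genBinom x (n - a) ≤ (𝒜.card : ℝ)) :
    (ℬ.card : ℝ) ≤ (n.choose b : ℝ) - genBinom x b :=
  stmt_9_general a b n hn 𝒜 ℬ h𝒜 hℬ hcross x hx1 hA
end

section
/- Let n ≥ a + b and assume A ⊆ ([n] choose a) and B ⊆ ([n] choose b) are cross-intersecting. Then the initial segments L([n], |A|, a) and L([n], |B|, b) of the lexicographic order are also cross-intersecting. -/
open Finset

/-- `A` strictly precedes `B` in the lexicographic order: the smallest element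
of the symmetric difference `A △ B` belongs to `A`. -/
def LexLT (A B : Finset ℕ) : Prop :=
  ∃ m ∈ A, m ∉ B ∧ ∀ x < m, (x ∈ A ↔ x ∈ B)

/-- `L` is an initial segment of the lexicographic order on `k`-element
subsets of `[n]`. (The family `L([n], |L|, k)` of the first `|L|` such sets.) -/
def IsLexInitSeg (n k : ℕ) (L : Finset (Finset ℕ)) : Prop :=
  L ⊆ (Finset.Icc 1 n).powersetCard k ∧
  ∀ A ∈ L, ∀ B ∈ (Finset.Icc 1 n).powersetCard k, LexLT B A → B ∈ L

open scoped FinsetFamily symmDiff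

/-!
Under `i ↦ n - i`, subsets of `[n]` become subsets of `Fin n`, and the lexicographic order becomes
the reverse of the colexicographic order, so lex initial segments become colex final segments.
Since `A ∩ B = ∅` iff `B ⊆ Aᶜ`, two families of `a`- and `b`-sets are cross-intersecting iff the
`(n - a - b)`-th iterated shadow of the family of complements misses the second family.
Complementation turns colex final segments into colex initial segments, and by Kruskal–Katona
an initial segment has the smallest iterated shadow among families of its size, that shadow being
again an initial segment. It is therefore contained in the initial segment complementary to the
final segment of `b`-sets, which is what cross-intersection asks for.
-/

namespace Finset.Colex

variable {α : Type*} [LinearOrder α] {𝒜 ℬ : Finset (Finset α)} {s t : Finset α} {r : ℕ}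

def IsFinalSeg (𝒜 : Finset (Finset α)) (r : ℕ) : Prop :=
  (𝒜 : Set (Finset α)).Sized r ∧
    ∀ ⦃s t : Finset α⦄, s ∈ 𝒜 → toColex s < toColex t ∧ #t = r → t ∈ 𝒜

section Fintype

variable [Fintype α]

lemma toColex_compl_lt_toColex_compl :
    toColex sᶜ < toColex tᶜ ↔ toColex t < toColex s := by
  simp only [toColex_lt_toColex_iff_exists_forall_lt, mem_compl, not_not]
  exact exists_congr fun a => by tauto

lemma IsFinalSeg.isInitSeg_compls (h : IsFinalSeg 𝒜 r) :
    IsInitSeg 𝒜ᶜˢ (Fintype.card α - r) := by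
  refine ⟨h.1.compls, fun s t hs ⟨hts, ht⟩ => ?_⟩
  rw [mem_compls] at hs ⊢
  refine h.2 hs ⟨toColex_compl_lt_toColex_compl.2 hts, ?_⟩
  have := h.1 hs
  rw [card_compl] at this ⊢
  omega

lemma IsFinalSeg.isInitSeg_powersetCard_sdiff (h : IsFinalSeg 𝒜 r) :
    IsInitSeg (powersetCard r univ \ 𝒜) r := by
  refine ⟨fun s hs => (mem_powersetCard.1 (mem_sdiff.1 hs).1).2, fun s t hs ⟨hts, ht⟩ => ?_⟩
  rw [mem_sdiff] at hs ⊢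
  exact ⟨mem_powersetCard.2 ⟨subset_univ _, ht⟩,
    fun htA => hs.2 (h.2 htA ⟨hts, (mem_powersetCard.1 hs.1).2⟩)⟩

lemma IsInitSeg.shadow_iterate (h : IsInitSeg 𝒜 r) (k : ℕ) : IsInitSeg (∂^[k] 𝒜) (r - k) := by
  induction k with
  | zero => simpa
  | succ k ih => simpa [Function.iterate_succ_apply', Nat.sub_sub] using ih.shadow

lemma disjoint_shadow_iterate_compls_iff {a b : ℕ} (h𝒜 : (𝒜 : Set (Finset α)).Sized a)
    (hℬ : (ℬ : Set (Finset α)).Sized b) :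
    Disjoint (∂^[Fintype.card α - a - b] 𝒜ᶜˢ) ℬ ↔ ∀ A ∈ 𝒜, ∀ B ∈ ℬ, (A ∩ B).Nonempty := by
  simp_rw [disjoint_left, ← not_disjoint_iff_nonempty_inter, ← subset_compl_iff_disjoint_left,
    mem_shadow_iterate_iff_exists_sdiff, exists_compls_iff]
  constructor
  · rintro h A hA B hB hBA
    refine h ⟨A, hA, hBA, ?_⟩ hB
    rw [card_sdiff_of_subset hBA, card_compl, h𝒜 hA, hℬ hB]
  · rintro h B ⟨A, hA, hBA, -⟩ hB
    exact h A hA B hB hBA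

end Fintype

lemma disjoint_shadow_iterate_of_isInitSeg {n s : ℕ} {𝒜 ℬ 𝒞 𝒟 : Finset (Finset (Fin n))}
    (hsr : s ≤ r) (h𝒜 : (𝒜 : Set (Finset (Fin n))).Sized r)
    (hℬ : (ℬ : Set (Finset (Fin n))).Sized s) (h𝒜ℬ : Disjoint (∂^[r - s] 𝒜) ℬ)
    (h𝒞 : IsInitSeg 𝒞 r) (h𝒞𝒜 : #𝒞 ≤ #𝒜) (h𝒟 : IsFinalSeg 𝒟 s) (h𝒟ℬ : #𝒟 ≤ #ℬ) :
    Disjoint (∂^[r - s] 𝒞) 𝒟 := by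
  set ℰ := powersetCard s univ \ 𝒟
  have hℬP : ℬ ⊆ powersetCard s univ := fun B hB => mem_powersetCard.2 ⟨subset_univ _, hℬ hB⟩
  have h𝒜ℬP : ∂^[r - s] 𝒜 ⊆ powersetCard s univ \ ℬ := fun C hC => by
    have hC' : #C = s := by simpa [Nat.sub_sub_self hsr] using h𝒜.shadow_iterate hC
    exact mem_sdiff.2 ⟨mem_powersetCard.2 ⟨subset_univ _, hC'⟩, disjoint_left.1 h𝒜ℬ hC⟩
  have hcard : #(∂^[r - s] 𝒞) ≤ #ℰ := calc
    #(∂^[r - s] 𝒞) ≤ #(∂^[r - s] 𝒜) := iterated_kk h𝒜 h𝒞𝒜 h𝒞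
    _ ≤ #(powersetCard s univ \ ℬ) := card_le_card h𝒜ℬP
    _ = #(powersetCard s univ) - #ℬ := card_sdiff_of_subset hℬP
    _ ≤ #(powersetCard s univ) - #𝒟 := by omega
    _ ≤ #ℰ := le_card_sdiff _ _
  have hinit : IsInitSeg (∂^[r - s] 𝒞) s := by
    simpa [Nat.sub_sub_self hsr] using h𝒞.shadow_iterate (r - s)
  have hsub : ∂^[r - s] 𝒞 ⊆ ℰ := by
    obtain h | h := hinit.total h𝒟.isInitSeg_powersetCard_sdiff
    · exact h
    · exact (eq_of_subset_of_card_le h hcard).ge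
  exact disjoint_of_subset_left hsub sdiff_disjoint

theorem crossIntersecting_of_isFinalSeg {n a b : ℕ} {𝒜 ℬ 𝒞 𝒟 : Finset (Finset (Fin n))}
    (hab : a + b ≤ n) (h𝒜 : (𝒜 : Set (Finset (Fin n))).Sized a)
    (hℬ : (ℬ : Set (Finset (Fin n))).Sized b) (h𝒜ℬ : ∀ A ∈ 𝒜, ∀ B ∈ ℬ, (A ∩ B).Nonempty)
    (h𝒞 : IsFinalSeg 𝒞 a) (h𝒞𝒜 : #𝒞 ≤ #𝒜) (h𝒟 : IsFinalSeg 𝒟 b) (h𝒟ℬ : #𝒟 ≤ #ℬ) :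
    ∀ A ∈ 𝒞, ∀ B ∈ 𝒟, (A ∩ B).Nonempty := by
  rw [← disjoint_shadow_iterate_compls_iff h𝒜 hℬ] at h𝒜ℬ
  rw [← disjoint_shadow_iterate_compls_iff h𝒞.1 h𝒟.1]
  have h𝒞' := h𝒞.isInitSeg_compls
  have h𝒜' := h𝒜.compls
  simp only [Fintype.card_fin] at h𝒜ℬ h𝒞' h𝒜' ⊢
  exact disjoint_shadow_iterate_of_isInitSeg (by omega) h𝒜' hℬ h𝒜ℬ h𝒞' (by simpa) h𝒟 h𝒟ℬ

end Finset.Colex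

lemma lexLT_iff_exists_forall_lt {A B : Finset ℕ} :
    LexLT A B ↔ ∃ m ∈ A, m ∉ B ∧ ∀ x ∈ B, x ∉ A → m < x := by
  constructor
  · rintro ⟨m, hmA, hmB, hlt⟩
    refine ⟨m, hmA, hmB, fun x hxB hxA => lt_of_not_ge fun hxm => ?_⟩
    obtain rfl | hxm := hxm.eq_or_lt
    · exact hmB hxB
    · exact hxA ((hlt x hxm).2 hxB)
  · rintro ⟨m, hmA, hmB, hlt⟩
    have hne : (A ∆ B).Nonempty := ⟨m, mem_symmDiff.2 (Or.inl ⟨hmA, hmB⟩)⟩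
    set m₀ := (A ∆ B).min' hne
    have hm₀ : m₀ ∈ A ∆ B := min'_mem _ _
    have hm₀m : m₀ ≤ m := min'_le _ _ (mem_symmDiff.2 (Or.inl ⟨hmA, hmB⟩))
    rw [mem_symmDiff] at hm₀
    obtain hm₀A | ⟨hm₀B, hm₀A⟩ := hm₀
    · refine ⟨m₀, hm₀A.1, hm₀A.2, fun x hx => ?_⟩
      have : x ∉ A ∆ B := fun h => (min'_le _ _ h).not_gt hx
      rw [mem_symmDiff] at this
      tauto
    · exact absurd (hlt m₀ hm₀B hm₀A) hm₀m.not_gt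

def reflect (n : ℕ) : Fin n ↪ ℕ :=
  ⟨fun i => n - i, fun i j h => Fin.ext (by have := i.isLt; have := j.isLt; simp only at h; omega)⟩

variable {n : ℕ}

lemma reflect_apply (i : Fin n) : reflect n i = n - i := rfl

lemma reflect_lt_reflect {i j : Fin n} : reflect n i < reflect n j ↔ j < i := by
  have := i.isLt; have := j.isLt
  simp only [reflect_apply, Fin.lt_def]; omega

lemma map_reflect_univ : univ.map (reflect n) = Icc 1 n := by
  ext x
  simp only [mem_map, mem_univ, true_and, reflect_apply, mem_Icc]
  constructor
  · rintro ⟨i, rfl⟩; have := i.isLt; omega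
  · rintro ⟨h1, h2⟩; exact ⟨⟨n - x, by omega⟩, by simp only; omega⟩

lemma lexLT_map_reflect_iff {s t : Finset (Fin n)} :
    LexLT (s.map (reflect n)) (t.map (reflect n)) ↔ toColex t < toColex s := by
  rw [lexLT_iff_exists_forall_lt, Colex.toColex_lt_toColex_iff_exists_forall_lt]
  constructor
  · rintro ⟨m, hm, hmt, hlt⟩
    obtain ⟨a, has, rfl⟩ := mem_map.1 hm
    refine ⟨a, has, fun hat => hmt (mem_map_of_mem _ hat), fun b hbt hbs => ?_⟩
    exact reflect_lt_reflect.1 (hlt _ (mem_map_of_mem _ hbt) (by rwa [mem_map']))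
  · rintro ⟨a, has, hat, hlt⟩
    refine ⟨reflect n a, mem_map_of_mem _ has, by rwa [mem_map'], fun x hxt hxs => ?_⟩
    obtain ⟨b, hbt, rfl⟩ := mem_map.1 hxt
    exact reflect_lt_reflect.2 (hlt b hbt (by rwa [mem_map'] at hxs))

lemma exists_map_reflect_eq {k : ℕ} {𝒜 : Finset (Finset ℕ)} (h : 𝒜 ⊆ (Icc 1 n).powersetCard k) :
    ∃ 𝒜' : Finset (Finset (Fin n)), (𝒜' : Set (Finset (Fin n))).Sized k ∧
      𝒜'.map (mapEmbedding (reflect n)).toEmbedding = 𝒜 := by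
  rw [← map_reflect_univ, powersetCard_map, subset_map_iff] at h
  obtain ⟨𝒜', h𝒜', rfl⟩ := h
  exact ⟨𝒜', fun s hs => (mem_powersetCard.1 (h𝒜' hs)).2, rfl⟩

lemma IsLexInitSeg.isFinalSeg {k : ℕ} {𝒜 : Finset (Finset (Fin n))}
    (h : IsLexInitSeg n k (𝒜.map (mapEmbedding (reflect n)).toEmbedding)) :
    Colex.IsFinalSeg 𝒜 k := by
  refine ⟨fun s hs => ?_, fun s t hs ⟨hst, ht⟩ => ?_⟩
  · have := h.1 (mem_map_of_mem _ hs)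
    simpa using (mem_powersetCard.1 this).2
  · have hmem : t.map (reflect n) ∈ (Icc 1 n).powersetCard k := by
      rw [← map_reflect_univ, powersetCard_map]
      exact mem_map_of_mem _ (mem_powersetCard.2 ⟨subset_univ _, ht⟩)
    have := h.2 _ (mem_map_of_mem _ hs) _ hmem (lexLT_map_reflect_iff.2 hst)
    simpa using this

lemma forall_inter_nonempty_map_mapEmbedding {α β : Type*} [DecidableEq α] [DecidableEq β]
    (f : α ↪ β) {𝒜 ℬ : Finset (Finset α)} :
    (∀ A ∈ 𝒜.map (mapEmbedding f).toEmbedding, ∀ B ∈ ℬ.map (mapEmbedding f).toEmbedding,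
      (A ∩ B).Nonempty) ↔
      ∀ A ∈ 𝒜, ∀ B ∈ ℬ, (A ∩ B).Nonempty := by
  simp [← map_inter]

theorem stmt_10 (a b n : ℕ) (hn : a + b ≤ n)
    (𝒜 ℬ : Finset (Finset ℕ))
    (h𝒜 : 𝒜 ⊆ (Finset.Icc 1 n).powersetCard a)
    (hℬ : ℬ ⊆ (Finset.Icc 1 n).powersetCard b)
    (hcross : ∀ A ∈ 𝒜, ∀ B ∈ ℬ, (A ∩ B).Nonempty)
    (L𝒜 Lℬ : Finset (Finset ℕ))
    (hLA : IsLexInitSeg n a L𝒜) (hLAcard : L𝒜.card = 𝒜.card)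
    (hLB : IsLexInitSeg n b Lℬ) (hLBcard : Lℬ.card = ℬ.card) :
    ∀ A ∈ L𝒜, ∀ B ∈ Lℬ, (A ∩ B).Nonempty := by
  obtain ⟨𝒜', h𝒜', rfl⟩ := exists_map_reflect_eq h𝒜
  obtain ⟨ℬ', hℬ', rfl⟩ := exists_map_reflect_eq hℬ
  obtain ⟨𝒞, -, rfl⟩ := exists_map_reflect_eq hLA.1
  obtain ⟨𝒟, -, rfl⟩ := exists_map_reflect_eq hLB.1
  rw [forall_inter_nonempty_map_mapEmbedding] at hcross ⊢
  rw [card_map, card_map] at hLAcard hLBcard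
  exact Colex.crossIntersecting_of_isFinalSeg hn h𝒜' hℬ' hcross hLA.isFinalSeg hLAcard.le
    hLB.isFinalSeg hLBcard.le
end

section
/- Let n ≥ a + b and let A ⊆ ([n] choose a) and B ⊆ ([n] choose b) be cross-intersecting families. Let U, V ⊆ [n] be disjoint sets with |U| = |V| ≥ 1. Suppose that for every proper subset Ṽ ⊊ V, taking Ũ to be the set consisting of the |Ṽ| smallest elements of U, both families are invariant under the corresponding shift: S_{Ũ,Ṽ}(A) = A and S_{Ũ,Ṽ}(B) = B. Then S_{U,V}(A) and S_{U,V}(B) are also cross-intersecting. -/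
/-
If `A` was moved by the `(U ← V)` shift and `B` was not, so that `B` misses `U`, shift `B` back
towards `A₀` (the preimage of `A`) with the partial shift `(U' ← B ∩ V)`, where `U'` is the set of
the `|B ∩ V|` smallest elements of `U`: either `B ∩ V = V` and then `(B ∖ V) ∪ U ∈ ℬ` because `B`
was not moved, or `B ∩ V ⊊ V` and then `(B ∖ V) ∪ U' ∈ ℬ` by the invariance hypothesis. This set
meets `A₀`, which misses `U`, so `A₀` meets `B ∖ V`, and `(A₀ ∖ V) ∪ U` meets `B`. If both sets
were moved, both contain `U ≠ ∅`.
-/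

open Finset

/-- The `(U ← V)` shift of a single set:
`(F ∖ V) ∪ U` if `F ∩ (U ∪ V) = V`, and `F` otherwise. -/
def shiftUVSet (U V F : Finset ℕ) : Finset ℕ :=
  if F ∩ (U ∪ V) = V then (F \ V) ∪ U else F

/-- The `(U ← V)` shift of a family. -/
def shiftUVFam (U V : Finset ℕ) (𝒜 : Finset (Finset ℕ)) : Finset (Finset ℕ) :=
  𝒜.image (shiftUVSet U V) ∪ 𝒜.filter (fun F => shiftUVSet U V F ∈ 𝒜)

theorem Finset.exists_initial_subset_card_eq {α : Type*} [LinearOrder α]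
    (U : Finset α) {k : ℕ} (hk : k ≤ #U) :
    ∃ U' ⊆ U, #U' = k ∧ ∀ x ∈ U', ∀ y ∈ U \ U', x < y := by
  induction k with
  | zero => exact ⟨∅, empty_subset U, card_empty, by simp⟩
  | succ k ih =>
    obtain ⟨U', hU'U, hU'k, hlt⟩ := ih (by omega)
    have hne : (U \ U').Nonempty := by
      rw [← card_pos, card_sdiff_of_subset hU'U]
      omega
    set m := (U \ U').min' hne
    have hm : m ∈ U \ U' := min'_mem _ hne
    refine ⟨insert m U', insert_subset (mem_sdiff.mp hm).1 hU'U,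
      by rw [card_insert_of_notMem (mem_sdiff.mp hm).2, hU'k], ?_⟩
    intro x hx y hy
    have hy' : y ∈ U \ U' := by grind
    rcases mem_insert.mp hx with rfl | hx
    · exact lt_of_le_of_ne (min'_le _ y hy') (by grind)
    · exact hlt x hx y hy'

def IsStableUnderPartialShifts (U V : Finset ℕ) (ℬ : Finset (Finset ℕ)) : Prop :=
  ∀ V' : Finset ℕ, V' ⊂ V → ∀ U' : Finset ℕ, U' ⊆ U → #U' = #V' →
    (∀ x ∈ U', ∀ y ∈ U \ U', x < y) → shiftUVFam U' V' ℬ = ℬ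

theorem shiftUVSet_of_inter_eq {U V F : Finset ℕ} (h : F ∩ (U ∪ V) = V) :
    shiftUVSet U V F = (F \ V) ∪ U := if_pos h

theorem shiftUVSet_mem_shiftUVFam {U V F : Finset ℕ} {𝒜 : Finset (Finset ℕ)} (hF : F ∈ 𝒜) :
    shiftUVSet U V F ∈ shiftUVFam U V 𝒜 :=
  mem_union_left _ (mem_image_of_mem _ hF)

theorem mem_shiftUVFam_cases {U V A : Finset ℕ} {𝒜 : Finset (Finset ℕ)}
    (hA : A ∈ shiftUVFam U V 𝒜) :
    (A ∈ 𝒜 ∧ (A ∩ (U ∪ V) = V → (A \ V) ∪ U ∈ 𝒜)) ∨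
      ∃ A₀ ∈ 𝒜, A₀ ∩ (U ∪ V) = V ∧ A = (A₀ \ V) ∪ U := by
  rcases mem_union.mp hA with hA | hA
  · obtain ⟨A₀, hA₀, rfl⟩ := mem_image.mp hA
    by_cases h : A₀ ∩ (U ∪ V) = V
    · exact Or.inr ⟨A₀, hA₀, h, shiftUVSet_of_inter_eq h⟩
    · rw [shiftUVSet, if_neg h]
      exact Or.inl ⟨hA₀, fun h' => absurd h' h⟩
  · obtain ⟨hA, hshift⟩ := mem_filter.mp hA
    exact Or.inl ⟨hA, fun h => shiftUVSet_of_inter_eq h ▸ hshift⟩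

theorem exists_sdiff_union_mem_of_isStableUnderPartialShifts {U V B : Finset ℕ}
    {ℬ : Finset (Finset ℕ)} (hcard : #U = #V) (hℬ : IsStableUnderPartialShifts U V ℬ)
    (hB : B ∈ ℬ) (hBU : Disjoint B U) (hunmoved : B ∩ (U ∪ V) = V → (B \ V) ∪ U ∈ ℬ) :
    ∃ U' ⊆ U, (B \ V) ∪ U' ∈ ℬ := by
  have hBU' : B ∩ U = ∅ := disjoint_iff_inter_eq_empty.mp hBU
  by_cases hVB : B ∩ V = V
  · exact ⟨U, subset_rfl, hunmoved (by rw [inter_union_distrib_left, hBU', hVB, empty_union])⟩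
  · have hV' : B ∩ V ⊂ V := ssubset_of_subset_of_ne inter_subset_right hVB
    obtain ⟨U', hU'U, hU'card, hlt⟩ := U.exists_initial_subset_card_eq
      (hcard ▸ card_le_card hV'.subset)
    have hBU'' : B ∩ U' = ∅ := disjoint_iff_inter_eq_empty.mp (hBU.mono_right hU'U)
    have hshift : B ∩ (U' ∪ B ∩ V) = B ∩ V := by
      rw [inter_union_distrib_left, hBU'', empty_union, ← inter_assoc, inter_self]
    refine ⟨U', hU'U, ?_⟩
    rw [← sdiff_inter_self_left, ← shiftUVSet_of_inter_eq hshift, ← hℬ _ hV' U' hU'U hU'card hlt]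
    exact shiftUVSet_mem_shiftUVFam hB

theorem inter_nonempty_of_shifted_left {𝒜 ℬ : Finset (Finset ℕ)}
    (hcross : ∀ A ∈ 𝒜, ∀ B ∈ ℬ, (A ∩ B).Nonempty) {U V A₀ B : Finset ℕ}
    (hdisj : Disjoint U V) (hcard : #U = #V) (hℬ : IsStableUnderPartialShifts U V ℬ)
    (hA₀ : A₀ ∈ 𝒜) (hA₀V : A₀ ∩ (U ∪ V) = V)
    (hB : B ∈ ℬ) (hunmoved : B ∩ (U ∪ V) = V → (B \ V) ∪ U ∈ ℬ) :
    (((A₀ \ V) ∪ U) ∩ B).Nonempty := by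
  by_cases hBU : Disjoint B U
  · obtain ⟨U', hU'U, hB'⟩ :=
      exists_sdiff_union_mem_of_isStableUnderPartialShifts hcard hℬ hB hBU hunmoved
    have hA₀U : Disjoint A₀ U := disjoint_left.mpr fun x hxA hxU =>
      disjoint_left.mp hdisj hxU (hA₀V ▸ mem_inter.mpr ⟨hxA, mem_union_left _ hxU⟩)
    obtain ⟨x, hx⟩ := hcross A₀ hA₀ _ hB'
    obtain ⟨hxA₀, hxB'⟩ := mem_inter.mp hx
    have hxBV : x ∈ B \ V := (mem_union.mp hxB').resolve_right
      fun hxU' => disjoint_left.mp hA₀U hxA₀ (hU'U hxU')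
    exact ⟨x, mem_inter.mpr ⟨mem_union_left _ (mem_sdiff.mpr ⟨hxA₀, (mem_sdiff.mp hxBV).2⟩),
      (mem_sdiff.mp hxBV).1⟩⟩
  · obtain ⟨x, hx⟩ := not_disjoint_iff_nonempty_inter.mp hBU
    exact ⟨x, mem_inter.mpr ⟨mem_union_right _ (mem_inter.mp hx).2, (mem_inter.mp hx).1⟩⟩

theorem stmt_11_general
    (𝒜 ℬ : Finset (Finset ℕ))
    (hcross : ∀ A ∈ 𝒜, ∀ B ∈ ℬ, (A ∩ B).Nonempty)
    (U V : Finset ℕ)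
    (hdisj : Disjoint U V) (hcard : U.card = V.card) (hpos : 1 ≤ U.card)
    (hinv : ∀ V' : Finset ℕ, V' ⊂ V → ∀ U' : Finset ℕ, U' ⊆ U →
      U'.card = V'.card → (∀ x ∈ U', ∀ y ∈ U \ U', x < y) →
      shiftUVFam U' V' 𝒜 = 𝒜 ∧ shiftUVFam U' V' ℬ = ℬ) :
    ∀ A ∈ shiftUVFam U V 𝒜, ∀ B ∈ shiftUVFam U V ℬ, (A ∩ B).Nonempty := by
  have h𝒜 : IsStableUnderPartialShifts U V 𝒜 := fun V' hV' U' hU' hc hlt =>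
    (hinv V' hV' U' hU' hc hlt).1
  have hℬ : IsStableUnderPartialShifts U V ℬ := fun V' hV' U' hU' hc hlt =>
    (hinv V' hV' U' hU' hc hlt).2
  have hcross' : ∀ B ∈ ℬ, ∀ A ∈ 𝒜, (B ∩ A).Nonempty :=
    fun B hB A hA => inter_comm A B ▸ hcross A hA B hB
  intro A hA B hB
  rcases mem_shiftUVFam_cases hA with ⟨hA, hAunmoved⟩ | ⟨A₀, hA₀, hA₀V, rfl⟩ <;>
    rcases mem_shiftUVFam_cases hB with ⟨hB, hBunmoved⟩ | ⟨B₀, hB₀, hB₀V, rfl⟩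
  · exact hcross A hA B hB
  · exact inter_comm A _ ▸
      inter_nonempty_of_shifted_left hcross' hdisj hcard h𝒜 hB₀ hB₀V hA hAunmoved
  · exact inter_nonempty_of_shifted_left hcross hdisj hcard hℬ hA₀ hA₀V hB hBunmoved
  · obtain ⟨u, hu⟩ := card_pos.mp hpos
    exact ⟨u, mem_inter.mpr ⟨mem_union_right _ hu, mem_union_right _ hu⟩⟩

theorem stmt_11 (a b n : ℕ) (hn : a + b ≤ n)
    (𝒜 ℬ : Finset (Finset ℕ))
    (h𝒜 : 𝒜 ⊆ (Finset.Icc 1 n).powersetCard a)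
    (hℬ : ℬ ⊆ (Finset.Icc 1 n).powersetCard b)
    (hcross : ∀ A ∈ 𝒜, ∀ B ∈ ℬ, (A ∩ B).Nonempty)
    (U V : Finset ℕ) (hU : U ⊆ Finset.Icc 1 n) (hV : V ⊆ Finset.Icc 1 n)
    (hdisj : Disjoint U V) (hcard : U.card = V.card) (hpos : 1 ≤ U.card)
    (hinv : ∀ V' : Finset ℕ, V' ⊂ V → ∀ U' : Finset ℕ, U' ⊆ U →
      U'.card = V'.card → (∀ x ∈ U', ∀ y ∈ U \ U', x < y) →
      shiftUVFam U' V' 𝒜 = 𝒜 ∧ shiftUVFam U' V' ℬ = ℬ) :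
    ∀ A ∈ shiftUVFam U V 𝒜, ∀ B ∈ shiftUVFam U V ℬ, (A ∩ B).Nonempty :=
  stmt_11_general 𝒜 ℬ hcross U V hdisj hcard hpos hinv
end

section
/- Fix integers s ≥ 2, t ≥ 2 and m ≥ s + t − 1, and define f(x) := C(x, t-1)·C(m-3, s-2)/C(m-3, t-2) − C(x, m-s). Then f is monotone non-decreasing on the interval m − s ≤ x ≤ m − 3, and if moreover m ≥ s + t, then f is strictly increasing on this interval. -/
open Finset

/-- `f(x) = C(x, t-1)·C(m-3, s-2)/C(m-3, t-2) − C(x, m-s)`. -/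
noncomputable def fKK (m s t : ℕ) (x : ℝ) : ℝ :=
  genBinom x (t - 1) * ((m - 3).choose (s - 2) : ℝ) / ((m - 3).choose (t - 2) : ℝ)
    - genBinom x (m - s)


/-!
Put `k = t - 1`, `ℓ = m - s`, `n = m - 3`, so that `C(m-3, s-2) = C(n, ℓ-1)` and `f` only
involves `C(x,k)` and `C(x,ℓ)`. If `ℓ = k` then `f ≡ 0`. Otherwise, on `[ℓ, n]`,
`ℓ! f(x) = λ P_k(x) - P_ℓ(x)` with `P_j(x) = ∏_{i<j} (x - i)` and `λ = (ℓ/k) N`,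
`N = ∏_{k≤i<ℓ} (n + 1 - i)`. With `Q = P_ℓ / P_k`, `S = ∑_{i<k} 1/(x-i)`, `T = ∑_{k≤i<ℓ} 1/(x-i)`
the logarithmic derivatives give `f' > 0 ⟺ k Q (S + T) < ℓ N S`, which follows from
`x S ≥ k`, `(x - ℓ + 1) T ≤ ℓ - k` and `N ≥ Q (1 + T)`.
-/

open scoped Nat

lemma one_add_sum_le_prod_one_add {ι R : Type*} [CommSemiring R] [PartialOrder R]
    [IsOrderedRing R] (s : Finset ι) {f : ι → R} (hf : ∀ i ∈ s, 0 ≤ f i) :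
    1 + ∑ i ∈ s, f i ≤ ∏ i ∈ s, (1 + f i) := by
  induction s using Finset.cons_induction with
  | empty => simp
  | cons a s ha ih =>
    rw [prod_cons, sum_cons]
    have ha : 0 ≤ f a := hf a (mem_cons_self a s)
    have hs := fun i hi => hf i (mem_cons_of_mem hi)
    calc 1 + (f a + ∑ i ∈ s, f i) ≤ (1 + f a) * (1 + ∑ i ∈ s, f i) := by
          have := mul_nonneg ha (sum_nonneg hs)
          calc _ ≤ 1 + (f a + ∑ i ∈ s, f i) + f a * ∑ i ∈ s, f i := le_add_of_nonneg_right this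
            _ = _ := by ring
      _ ≤ (1 + f a) * ∏ i ∈ s, (1 + f i) := by
          gcongr
          · exact add_nonneg zero_le_one ha
          · exact ih hs

lemma hasDerivAt_prod_range_sub (j : ℕ) {x : ℝ} (hx : ∀ i < j, x - i ≠ 0) :
    HasDerivAt (fun y : ℝ => ∏ i ∈ range j, (y - i))
      ((∏ i ∈ range j, (x - i)) * ∑ i ∈ range j, (x - i)⁻¹) x := by
  refine (HasDerivAt.fun_finsetProd (u := range j) (f := fun (i : ℕ) (y : ℝ) => y - i)
    (f' := fun _ => 1) fun i _ => (hasDerivAt_id x).sub_const (i : ℝ)).congr_deriv ?_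
  rw [mul_sum]
  refine sum_congr rfl fun i hi => ?_
  rw [← prod_erase_mul _ _ hi, mul_assoc, mul_inv_cancel₀ (hx i (mem_range.1 hi))]
  simp

lemma natCast_le_mul_sum_range_inv_sub {k : ℕ} {x : ℝ} (hx : (k : ℝ) - 1 < x) :
    (k : ℝ) ≤ x * ∑ i ∈ range k, (x - i)⁻¹ := by
  rw [mul_sum]
  simpa using card_nsmul_le_sum (range k) (fun i => x * (x - i)⁻¹) 1 fun i hi => by
    have hi : (i : ℝ) + 1 ≤ k := by exact_mod_cast mem_range.1 hi
    rw [le_mul_inv_iff₀ (by linarith)]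
    linarith [(Nat.cast_nonneg i : (0 : ℝ) ≤ i)]

lemma mul_sum_Ico_inv_sub_le {k ℓ : ℕ} {x : ℝ} (hx : (ℓ : ℝ) - 1 < x) :
    (x - ℓ + 1) * ∑ i ∈ Ico k ℓ, (x - i)⁻¹ ≤ (ℓ - k : ℕ) := by
  rw [mul_sum]
  simpa using sum_le_card_nsmul (Ico k ℓ) (fun i => (x - ℓ + 1) * (x - i)⁻¹) 1 fun i hi => by
    have hi : (i : ℝ) + 1 ≤ ℓ := by exact_mod_cast (mem_Ico.1 hi).2
    rw [mul_inv_le_iff₀ (by linarith)]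
    linarith

lemma prod_Ico_sub_mul_one_add_sum_inv_le {k ℓ : ℕ} {x y : ℝ} (hx : (ℓ : ℝ) - 1 < x)
    (hxy : x ≤ y) :
    (∏ i ∈ Ico k ℓ, (x - i)) * (1 + ∑ i ∈ Ico k ℓ, (x - i)⁻¹) ≤ ∏ i ∈ Ico k ℓ, (y + 1 - i) := by
  have hpos : ∀ i ∈ Ico k ℓ, 0 < x - i := fun i hi => by
    have hi : (i : ℝ) + 1 ≤ ℓ := by exact_mod_cast (mem_Ico.1 hi).2
    linarith
  calc (∏ i ∈ Ico k ℓ, (x - i)) * (1 + ∑ i ∈ Ico k ℓ, (x - i)⁻¹)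
      ≤ (∏ i ∈ Ico k ℓ, (x - i)) * ∏ i ∈ Ico k ℓ, (1 + (x - i)⁻¹) := by
        gcongr
        · exact (prod_pos hpos).le
        · exact one_add_sum_le_prod_one_add _ fun i hi => (inv_pos.2 (hpos i hi)).le
    _ = ∏ i ∈ Ico k ℓ, (x + 1 - i) := by
        rw [← prod_mul_distrib]
        refine prod_congr rfl fun i hi => ?_
        rw [mul_add, mul_inv_cancel₀ (hpos i hi).ne']
        ring
    _ ≤ ∏ i ∈ Ico k ℓ, (y + 1 - i) := by
        gcongr with i hi
        exact fun i hi => by linarith [hpos i hi]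

lemma natCast_mul_prod_mul_sum_inv_lt {k ℓ : ℕ} {x y : ℝ} (hk : 1 ≤ k) (hkl : k < ℓ)
    (hx : (ℓ : ℝ) - 1 < x) (hxy : x ≤ y) :
    k * (∏ i ∈ Ico k ℓ, (x - i)) * (∑ i ∈ range k, (x - i)⁻¹ + ∑ i ∈ Ico k ℓ, (x - i)⁻¹)
      < ℓ * (∏ i ∈ Ico k ℓ, (y + 1 - i)) * ∑ i ∈ range k, (x - i)⁻¹ := by
  have hkℓ : (k : ℝ) + 1 ≤ ℓ := by exact_mod_cast hkl
  have hpos : ∀ i < ℓ, 0 < x - i := fun i hi => by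
    have hi : (i : ℝ) + 1 ≤ ℓ := by exact_mod_cast hi
    linarith
  set S := ∑ i ∈ range k, (x - i)⁻¹
  set T := ∑ i ∈ Ico k ℓ, (x - i)⁻¹
  set Q := ∏ i ∈ Ico k ℓ, (x - i)
  have hS : 0 < S := sum_pos (fun i hi => inv_pos.2 (hpos i ((mem_range.1 hi).trans hkl)))
    (nonempty_range_iff.2 (by omega))
  have hT : 0 < T := sum_pos (fun i hi => inv_pos.2 (hpos i (mem_Ico.1 hi).2))
    (nonempty_Ico.2 hkl)
  have hQ : 0 < Q := prod_pos fun i hi => hpos i (mem_Ico.1 hi).2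
  have hkS : (k : ℝ) ≤ x * S := natCast_le_mul_sum_range_inv_sub (by linarith)
  have hxT : x * T < ℓ - k + ℓ * T := by
    have := mul_sum_Ico_inv_sub_le (k := k) hx
    rw [Nat.cast_sub hkl.le] at this
    linarith
  calc k * Q * (S + T) = Q * (k * S + k * T) := by ring
    _ ≤ Q * (k * S + x * S * T) := by gcongr
    _ < Q * (k * S + (ℓ - k + ℓ * T) * S) :=
        mul_lt_mul_of_pos_left (by linarith [mul_lt_mul_of_pos_right hxT hS]) hQ
    _ = ℓ * (Q * (1 + T)) * S := by ring
    _ ≤ ℓ * (∏ i ∈ Ico k ℓ, (y + 1 - i)) * S := by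
        gcongr
        exact prod_Ico_sub_mul_one_add_sum_inv_le hx hxy

lemma add_one_mul_choose_pred_mul_factorial {n j : ℕ} (hj : 1 ≤ j) :
    ((n + 1) * n.choose (j - 1) * j ! : ℝ) = j * ∏ i ∈ range j, ((n : ℝ) + 1 - i) := by
  have h : (n + 1) * n.choose (j - 1) * j ! = j * (n + 1).descFactorial j := by
    rw [Nat.add_one_mul_choose_eq, Nat.sub_add_cancel hj, Nat.descFactorial_eq_factorial_mul_choose]
    ring
  have hdesc := descPochhammer_eval_eq_descFactorial ℝ (n + 1) j
  push_cast at hdesc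
  rw [← descPochhammer_eval_eq_prod_range, hdesc]
  exact_mod_cast h

lemma choose_pred_mul_factorial_mul_eq {n k ℓ : ℕ} (hk : 1 ≤ k) (hkl : k ≤ ℓ) :
    (n.choose (ℓ - 1) * ℓ ! * k : ℝ)
      = n.choose (k - 1) * k ! * ℓ * ∏ i ∈ Ico k ℓ, ((n : ℝ) + 1 - i) := by
  have hn : (n : ℝ) + 1 ≠ 0 := by positivity
  apply mul_left_cancel₀ hn
  have hℓ := add_one_mul_choose_pred_mul_factorial (n := n) (hk.trans hkl)
  have hk' := add_one_mul_choose_pred_mul_factorial (n := n) hk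
  rw [← prod_range_mul_prod_Ico _ hkl] at hℓ
  linear_combination (k : ℝ) * hℓ - ℓ * (∏ i ∈ Ico k ℓ, ((n : ℝ) + 1 - i)) * hk'

lemma strictMonoOn_mul_prod_range_sub_prod_range {k ℓ : ℕ} {y : ℝ} (hk : 1 ≤ k) (hkl : k < ℓ) :
    StrictMonoOn (fun x : ℝ => ℓ / k * (∏ i ∈ Ico k ℓ, (y + 1 - i)) * (∏ i ∈ range k, (x - i))
      - ∏ i ∈ range ℓ, (x - i)) (Set.Icc ℓ y) := by
  refine strictMonoOn_of_deriv_pos (convex_Icc _ _) (Continuous.continuousOn (by fun_prop))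
    fun x hx => ?_
  rw [interior_Icc] at hx
  have hpos : ∀ i < ℓ, 0 < x - i := fun i hi => by
    have hi : (i : ℝ) + 1 ≤ ℓ := by exact_mod_cast hi
    linarith [hx.1]
  have hderiv := ((hasDerivAt_prod_range_sub k fun i hi => (hpos i (hi.trans hkl)).ne').const_mul
    (ℓ / k * ∏ i ∈ Ico k ℓ, (y + 1 - i))).fun_sub
    (hasDerivAt_prod_range_sub ℓ fun i hi => (hpos i hi).ne')
  rw [hderiv.deriv, ← prod_range_mul_prod_Ico _ hkl.le, ← sum_range_add_sum_Ico _ hkl.le]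
  have hP : 0 < ∏ i ∈ range k, (x - i) := prod_pos fun i hi => hpos i ((mem_range.1 hi).trans hkl)
  have hk₀ : (0 : ℝ) < k := by exact_mod_cast hk
  have key := natCast_mul_prod_mul_sum_inv_lt hk hkl (by linarith [hx.1]) hx.2.le
  calc (0 : ℝ) < (∏ i ∈ range k, (x - i)) / k * (ℓ * (∏ i ∈ Ico k ℓ, (y + 1 - i))
        * ∑ i ∈ range k, (x - i)⁻¹ - k * (∏ i ∈ Ico k ℓ, (x - i))
        * (∑ i ∈ range k, (x - i)⁻¹ + ∑ i ∈ Ico k ℓ, (x - i)⁻¹)) := by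
        have := sub_pos.2 key
        positivity
    _ = _ := by field_simp

noncomputable def binomDiff (n k ℓ : ℕ) (x : ℝ) : ℝ :=
  genBinom x k * n.choose (ℓ - 1) / n.choose (k - 1) - genBinom x ℓ

lemma fKK_eq_binomDiff {m s t : ℕ} (hs : 2 ≤ s) (hsm : s < m) :
    fKK m s t = binomDiff (m - 3) (t - 1) (m - s) := by
  have hchoose : (m - 3).choose (s - 2) = (m - 3).choose (m - s - 1) := by
    rw [← Nat.choose_symm (by omega : s - 2 ≤ m - 3)]
    congr 1
    omega
  funext x
  rw [fKK, binomDiff, hchoose, show t - 2 = t - 1 - 1 by omega]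

lemma binomDiff_self {n k : ℕ} (hkn : k ≤ n + 1) : binomDiff n k k = 0 := by
  have hB : (n.choose (k - 1) : ℝ) ≠ 0 := by exact_mod_cast (Nat.choose_pos (by omega)).ne'
  funext x
  rw [binomDiff, mul_div_assoc, div_self hB, mul_one, sub_self, Pi.zero_apply]

lemma binomDiff_eqOn {n k ℓ : ℕ} (hk : 1 ≤ k) (hkl : k ≤ ℓ) (hkn : k ≤ n + 1) :
    Set.EqOn (binomDiff n k ℓ) (fun x => (ℓ ! : ℝ)⁻¹ * (ℓ / k * (∏ i ∈ Ico k ℓ, ((n : ℝ) + 1 - i))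
      * (∏ i ∈ range k, (x - i)) - ∏ i ∈ range ℓ, (x - i))) (Set.Ici ℓ) := by
  intro x hx
  have hkx : (k : ℝ) ≤ x := le_trans (by exact_mod_cast hkl) hx
  have hB : (n.choose (k - 1) : ℝ) ≠ 0 := by exact_mod_cast (Nat.choose_pos (by omega)).ne'
  have hk₀ : (k : ℝ) ≠ 0 := by positivity
  have hid := choose_pred_mul_factorial_mul_eq (n := n) hk hkl
  simp only [binomDiff, genBinom, if_pos hkx, if_pos (Set.mem_Ici.1 hx)]
  field_simp
  linear_combination (∏ i ∈ range k, (x - i)) * hid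

lemma binomDiff_strictMonoOn {n k ℓ : ℕ} (hk : 1 ≤ k) (hkl : k < ℓ) (hkn : k ≤ n + 1) :
    StrictMonoOn (binomDiff n k ℓ) (Set.Icc ℓ n) := by
  intro a ha b hb hab
  have heq := binomDiff_eqOn (n := n) hk hkl.le hkn
  rw [heq ha.1, heq hb.1]
  exact mul_lt_mul_of_pos_left
    (strictMonoOn_mul_prod_range_sub_prod_range hk hkl ha hb hab) (by positivity)

lemma binomDiff_monotoneOn {n k ℓ : ℕ} (hk : 1 ≤ k) (hkl : k ≤ ℓ) (hkn : k ≤ n + 1) :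
    MonotoneOn (binomDiff n k ℓ) (Set.Icc ℓ n) := by
  rcases hkl.eq_or_lt with rfl | hlt
  · rw [binomDiff_self hkn]
    exact monotoneOn_const
  · exact (binomDiff_strictMonoOn hk hlt hkn).monotoneOn

theorem stmt_12 (s t m : ℕ) (hs : 2 ≤ s) (ht : 2 ≤ t) (hm : s + t - 1 ≤ m) :
    (∀ x₁ x₂ : ℝ, (m : ℝ) - s ≤ x₁ → x₁ ≤ x₂ → x₂ ≤ (m : ℝ) - 3 →
      fKK m s t x₁ ≤ fKK m s t x₂) ∧
    (s + t ≤ m → ∀ x₁ x₂ : ℝ, (m : ℝ) - s ≤ x₁ → x₁ < x₂ → x₂ ≤ (m : ℝ) - 3 →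
      fKK m s t x₁ < fKK m s t x₂) := by
  have hℓ : (m : ℝ) - s = (m - s : ℕ) := by rw [Nat.cast_sub (by omega)]
  have hn : (m : ℝ) - 3 = (m - 3 : ℕ) := by rw [Nat.cast_sub (by omega)]; norm_num
  rw [fKK_eq_binomDiff hs (by omega), hℓ, hn]
  refine ⟨fun x₁ x₂ h₁ h₁₂ h₂ => ?_, fun hst x₁ x₂ h₁ h₁₂ h₂ => ?_⟩
  · exact binomDiff_monotoneOn (by omega) (by omega) (by omega)
      ⟨h₁, h₁₂.trans h₂⟩ ⟨h₁.trans h₁₂, h₂⟩ h₁₂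
  · exact binomDiff_strictMonoOn (by omega) (by omega) (by omega)
      ⟨h₁, h₁₂.le.trans h₂⟩ ⟨h₁.trans h₁₂.le, h₂⟩ h₁₂
end

section
/- Fix integers s ≥ 2, t ≥ 2 and m ≥ s + t − 1, and define f(x) := C(x, t-1)·C(m-3, s-2)/C(m-3, t-2) − C(x, m-s). Then f(y) ≥ f(m-3) for every real y with m − 3 ≤ y ≤ m − 2. -/
open Finset

open scoped Nat

/-!
Put `n = m - 3`. Then `f(x) = c·C(x, a) − C(x, b)` with `a = t - 1 ≤ b = m - s ≤ n + 1` and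
`c = C(n, b - 1) / C(n, a - 1)`, and Pascal's rule gives `f(n) = f(n + 1) ≥ 0`.
If `b ≤ n`, then on `[n, n + 1]` we can factor `f = A·h` with `A(x) = ∏_{i < a} (x - i)` and
`h(x) = c / a! − ∏_{a ≤ j < b} (x - j) / b!`. A product of nonnegative increasing affine functions
lies below its chord, so `h` lies above its chord; together with the factorwise bound
`α (α + 1) ≤ (α + u) (α + 1 - u)` the same fact shows that `1/A` lies below its chord. Since `A·h`
equals `f(n) ≥ 0` at both endpoints, it follows that `f ≥ f(n)` on the whole interval.
If `b = n + 1`, then `C(x, b)` vanishes on `[n, n + 1)`, where `f` is therefore increasing.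
-/

section ProductBounds

variable {ι : Type*} (s : Finset ι) {u : ℝ}

theorem prod_lerp_le_lerp_prod (x z : ι → ℝ) (hx : ∀ i ∈ s, 0 ≤ x i) (hxz : ∀ i ∈ s, x i ≤ z i)
    (hu₀ : 0 ≤ u) (hu₁ : u ≤ 1) :
    ∏ i ∈ s, ((1 - u) * x i + u * z i) ≤ (1 - u) * ∏ i ∈ s, x i + u * ∏ i ∈ s, z i := by
  induction s using Finset.cons_induction with
  | empty => simp
  | cons a s ha ih =>
    simp only [forall_mem_cons] at hx hxz
    simp only [prod_cons]
    have hPQ : ∏ i ∈ s, x i ≤ ∏ i ∈ s, z i := prod_le_prod hx.2 hxz.2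
    calc ((1 - u) * x a + u * z a) * ∏ i ∈ s, ((1 - u) * x i + u * z i)
        ≤ ((1 - u) * x a + u * z a) * ((1 - u) * ∏ i ∈ s, x i + u * ∏ i ∈ s, z i) := by
          gcongr
          · nlinarith [hx.1, hxz.1]
          · exact ih hx.2 hxz.2
      _ ≤ (1 - u) * (x a * ∏ i ∈ s, x i) + u * (z a * ∏ i ∈ s, z i) := by
          -- the difference is `u (1 - u) (z a - x a) (∏ z - ∏ x)`
          nlinarith [mul_nonneg (mul_nonneg (mul_nonneg hu₀ (sub_nonneg.2 hu₁))
            (sub_nonneg.2 hxz.1)) (sub_nonneg.2 hPQ)]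

theorem inv_prod_add_le_lerp (α : ι → ℝ) (hα : ∀ i ∈ s, 0 < α i) (hu₀ : 0 ≤ u) (hu₁ : u ≤ 1) :
    (∏ i ∈ s, (α i + u))⁻¹ ≤ (1 - u) * (∏ i ∈ s, α i)⁻¹ + u * (∏ i ∈ s, (α i + 1))⁻¹ := by
  have hP : 0 < ∏ i ∈ s, α i := prod_pos hα
  have hQ : 0 < ∏ i ∈ s, (α i + 1) := prod_pos fun i hi ↦ by linarith [hα i hi]
  have hR : 0 < ∏ i ∈ s, (α i + u) := prod_pos fun i hi ↦ by linarith [hα i hi]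
  have hfactor : ∏ i ∈ s, (α i * (α i + 1)) ≤ ∏ i ∈ s, ((α i + u) * (α i + 1 - u)) :=
    prod_le_prod (fun i hi ↦ by nlinarith [hα i hi]) fun i hi ↦ by nlinarith
  have hlerp : ∏ i ∈ s, (α i + 1 - u) ≤ u * ∏ i ∈ s, α i + (1 - u) * ∏ i ∈ s, (α i + 1) := by
    have h := prod_lerp_le_lerp_prod s α (fun i ↦ α i + 1) (fun i hi ↦ (hα i hi).le)
      (fun i _ ↦ by linarith) (u := 1 - u) (by linarith) (by linarith)
    simp only [sub_sub_cancel] at h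
    convert h using 2 with i
    ring
  rw [prod_mul_distrib, prod_mul_distrib] at hfactor
  rw [inv_le_iff_one_le_mul₀ hR, show (1 - u) * (∏ i ∈ s, α i)⁻¹ + u * (∏ i ∈ s, (α i + 1))⁻¹ =
      (u * ∏ i ∈ s, α i + (1 - u) * ∏ i ∈ s, (α i + 1)) / ((∏ i ∈ s, α i) * ∏ i ∈ s, (α i + 1)) by
    field_simp; ring, div_mul_eq_mul_div, one_le_div₀ (by positivity)]
  exact hfactor.trans (by rw [mul_comm]; gcongr)

end ProductBounds

section GenBinom

theorem genBinom_of_le {x : ℝ} {k : ℕ} (h : (k : ℝ) ≤ x) :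
    genBinom x k = (∏ i ∈ range k, (x - i)) / k ! :=
  if_pos h

theorem genBinom_of_lt {x : ℝ} {k : ℕ} (h : x < k) : genBinom x k = 0 :=
  if_neg h.not_ge

theorem genBinom_natCast (n k : ℕ) : genBinom n k = n.choose k := by
  rcases le_or_gt k n with hkn | hnk
  · rw [genBinom_of_le (by exact_mod_cast hkn), div_eq_iff (by positivity)]
    have : ∏ i ∈ range k, ((n : ℝ) - i) = (n.descFactorial k : ℝ) := by
      rw [Nat.descFactorial_eq_prod_range, Nat.cast_prod]
      exact prod_congr rfl fun i hi ↦ (Nat.cast_sub (by have := mem_range.1 hi; omega)).symm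
    rw [this, Nat.descFactorial_eq_factorial_mul_choose]
    push_cast
    ring
  · rw [genBinom_of_lt (by exact_mod_cast hnk), Nat.choose_eq_zero_of_lt hnk, Nat.cast_zero]

theorem genBinom_mono (k : ℕ) : Monotone (genBinom · k) := by
  intro x y hxy
  dsimp only
  have hfac : ∀ z : ℝ, (k : ℝ) ≤ z → ∀ i ∈ range k, 0 ≤ z - i := fun z hz i hi ↦ by
    have : (i : ℝ) < k := by exact_mod_cast mem_range.1 hi
    linarith
  by_cases hx : (k : ℝ) ≤ x
  · rw [genBinom_of_le hx, genBinom_of_le (hx.trans hxy)]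
    gcongr
    exact hfac x hx
  · rw [genBinom_of_lt (not_le.1 hx)]
    by_cases hy : (k : ℝ) ≤ y
    · rw [genBinom_of_le hy]
      exact div_nonneg (prod_nonneg (hfac y hy)) (by positivity)
    · rw [genBinom_of_lt (not_le.1 hy)]

end GenBinom

theorem Nat.succ_choose_succ_mul_choose_le {n a b : ℕ} (hab : a ≤ b) :
    (n + 1).choose (b + 1) * n.choose a ≤ (n + 1).choose (a + 1) * n.choose b := by
  have hb := Nat.add_one_mul_choose_eq n b
  have ha := Nat.add_one_mul_choose_eq n a
  refine le_of_mul_le_mul_right (a := (a + 1) * (b + 1)) ?_ (by positivity)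
  calc (n + 1).choose (b + 1) * n.choose a * ((a + 1) * (b + 1))
      = (n + 1) * n.choose b * n.choose a * (a + 1) := by rw [hb]; ring
    _ ≤ (n + 1) * n.choose b * n.choose a * (b + 1) := by gcongr
    _ = (n + 1).choose (a + 1) * (a + 1) * n.choose b * (b + 1) := by rw [← ha]; ring
    _ = (n + 1).choose (a + 1) * n.choose b * ((a + 1) * (b + 1)) := by ring

section Chord

variable {n a b : ℕ} {c : ℝ}

theorem genBinom_gap_eq_prod_mul (hab : a ≤ b) (hbn : b ≤ n) {u : ℝ} (hu : 0 ≤ u) :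
    c * genBinom (n + u) a - genBinom (n + u) b =
      (∏ i ∈ range a, ((n : ℝ) - i + u)) *
        (c / (a !) - (∏ j ∈ Ico a b, ((n : ℝ) - j + u)) / (b !)) := by
  have hb : (b : ℝ) ≤ n + u := by linarith [(Nat.cast_le (α := ℝ)).2 hbn]
  rw [genBinom_of_le ((Nat.cast_le.2 hab).trans hb), genBinom_of_le hb,
    ← prod_range_mul_prod_Ico _ hab]
  simp only [add_sub_right_comm]
  field_simp

theorem genBinom_gap_le_of_le (hab : a ≤ b) (hbn : b ≤ n)
    (hend : c * genBinom n a - genBinom n b = c * genBinom (n + 1) a - genBinom (n + 1) b)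
    (hpos : 0 ≤ c * genBinom (n + 1) a - genBinom (n + 1) b) {u : ℝ} (hu₀ : 0 ≤ u) (hu₁ : u ≤ 1) :
    c * genBinom n a - genBinom n b ≤ c * genBinom (n + u) a - genBinom (n + u) b := by
  set X := c * genBinom n a - genBinom n b
  set A : ℝ → ℝ := fun u ↦ ∏ i ∈ range a, ((n : ℝ) - i + u)
  set h : ℝ → ℝ := fun u ↦ c / (a !) - (∏ j ∈ Ico a b, ((n : ℝ) - j + u)) / (b !)
  have hsplit : ∀ u, 0 ≤ u → c * genBinom (n + u) a - genBinom (n + u) b = A u * h u :=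
    fun u hu ↦ genBinom_gap_eq_prod_mul hab hbn hu
  have hα : ∀ i ∈ range a, 0 < (n : ℝ) - i := fun i hi ↦ by
    have : (i : ℝ) < n := by exact_mod_cast (mem_range.1 hi).trans_le (hab.trans hbn)
    linarith
  have hA : ∀ u, 0 ≤ u → 0 < A u := fun u hu ↦ prod_pos fun i hi ↦ by linarith [hα i hi]
  have hh₀ : h 0 = X * (A 0)⁻¹ := by
    rw [show X = A 0 * h 0 by simpa using hsplit 0 le_rfl, mul_comm, inv_mul_cancel_left₀]
    exact (hA 0 le_rfl).ne'
  have hh₁ : h 1 = X * (A 1)⁻¹ := by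
    rw [hend, hsplit 1 zero_le_one, mul_comm, inv_mul_cancel_left₀]
    exact (hA 1 zero_le_one).ne'
  have hAinv : (A u)⁻¹ ≤ (1 - u) * (A 0)⁻¹ + u * (A 1)⁻¹ := by
    simpa [A] using inv_prod_add_le_lerp _ _ hα hu₀ hu₁
  have hh : (1 - u) * h 0 + u * h 1 ≤ h u := by
    have hG := prod_lerp_le_lerp_prod (Ico a b) (fun j ↦ (n : ℝ) - j + 0) (fun j ↦ (n : ℝ) - j + 1)
      (fun j hj ↦ by
        have : (j : ℝ) < n := by exact_mod_cast (mem_Ico.1 hj).2.trans_le hbn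
        linarith)
      (fun j _ ↦ by linarith) hu₀ hu₁
    have hG' : ∏ j ∈ Ico a b, ((n : ℝ) - j + u) ≤
        (1 - u) * ∏ j ∈ Ico a b, ((n : ℝ) - j + 0) + u * ∏ j ∈ Ico a b, ((n : ℝ) - j + 1) := by
      convert hG using 2 with j
      ring
    have := div_le_div_of_nonneg_right hG' (Nat.cast_nonneg (α := ℝ) (b !))
    simp only [h]
    rw [add_div, mul_div_assoc, mul_div_assoc] at this
    linarith
  have hXnonneg : 0 ≤ X := hend ▸ hpos
  calc X = A u * (X * (A u)⁻¹) := by field_simp [(hA u hu₀).ne']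
    _ ≤ A u * (X * ((1 - u) * (A 0)⁻¹ + u * (A 1)⁻¹)) := by gcongr; exact (hA u hu₀).le
    _ = A u * ((1 - u) * h 0 + u * h 1) := by rw [hh₀, hh₁]; ring
    _ ≤ A u * h u := by gcongr; exact (hA u hu₀).le
    _ = c * genBinom (n + u) a - genBinom (n + u) b := (hsplit u hu₀).symm

theorem genBinom_gap_le (hab : a ≤ b) (hb : b ≤ n + 1) (hc : 0 ≤ c)
    (hend : c * genBinom n a - genBinom n b = c * genBinom (n + 1) a - genBinom (n + 1) b)
    (hpos : 0 ≤ c * genBinom (n + 1) a - genBinom (n + 1) b) {u : ℝ} (hu₀ : 0 ≤ u) (hu₁ : u ≤ 1) :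
    c * genBinom n a - genBinom n b ≤ c * genBinom (n + u) a - genBinom (n + u) b := by
  rcases hb.lt_or_eq with hbn | rfl
  · exact genBinom_gap_le_of_le hab (Nat.lt_succ_iff.1 hbn) hend hpos hu₀ hu₁
  rcases hu₁.lt_or_eq with hu | rfl
  · rw [genBinom_of_lt (x := n) (k := n + 1) (by push_cast; linarith),
      genBinom_of_lt (x := n + u) (k := n + 1) (by push_cast; linarith), sub_zero, sub_zero]
    exact mul_le_mul_of_nonneg_left (genBinom_mono a (by linarith)) hc
  · exact hend.le

end Chord

section Pascal

variable (n : ℕ) {a b : ℕ}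

theorem genBinom_gap_natCast_eq_succ (ha : a ≤ n) :
    (n.choose b : ℝ) / n.choose a * genBinom n (a + 1) - genBinom n (b + 1) =
      (n.choose b : ℝ) / n.choose a * genBinom (n + 1) (a + 1) - genBinom (n + 1) (b + 1) := by
  have ha' : (n.choose a : ℝ) ≠ 0 := by exact_mod_cast (Nat.choose_pos ha).ne'
  rw [← Nat.cast_add_one, genBinom_natCast, genBinom_natCast, genBinom_natCast, genBinom_natCast,
    Nat.choose_succ_succ', Nat.choose_succ_succ']
  push_cast
  field_simp
  ring

theorem genBinom_gap_natCast_succ_nonneg (hab : a ≤ b) (ha : a ≤ n) :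
    0 ≤ (n.choose b : ℝ) / n.choose a * genBinom (n + 1) (a + 1) - genBinom (n + 1) (b + 1) := by
  rw [← Nat.cast_add_one, genBinom_natCast, genBinom_natCast, sub_nonneg, div_mul_eq_mul_div,
    le_div_iff₀ (by exact_mod_cast Nat.choose_pos ha), mul_comm (n.choose b : ℝ)]
  exact_mod_cast Nat.succ_choose_succ_mul_choose_le hab

end Pascal

theorem stmt_13 (s t m : ℕ) (hs : 2 ≤ s) (ht : 2 ≤ t) (hm : s + t - 1 ≤ m) :
    ∀ y : ℝ, (m : ℝ) - 3 ≤ y → y ≤ (m : ℝ) - 2 →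
      fKK m s t ((m : ℝ) - 3) ≤ fKK m s t y := by
  intro y hy₀ hy₁
  obtain ⟨n, rfl⟩ : ∃ n, m = n + 3 := ⟨m - 3, by omega⟩
  obtain ⟨a, rfl⟩ : ∃ a, t = a + 2 := ⟨t - 2, by omega⟩
  obtain ⟨b, hb⟩ : ∃ b, n + 3 - s = b + 1 := ⟨n + 2 - s, by omega⟩
  have hfKK : ∀ x, fKK (n + 3) s (a + 2) x =
      (n.choose b : ℝ) / n.choose a * genBinom x (a + 1) - genBinom x (b + 1) := by
    intro x
    rw [fKK, hb, show a + 2 - 1 = a + 1 by omega, Nat.add_sub_cancel, Nat.add_sub_cancel,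
      Nat.choose_symm_of_eq_add (show n = s - 2 + b by omega)]
    ring
  simp only [Nat.cast_add, Nat.cast_ofNat, add_sub_cancel_right] at hy₀ hy₁ ⊢
  rw [hfKK, hfKK, show y = n + (y - n) by ring]
  exact genBinom_gap_le (by omega) (by omega) (by positivity)
    (genBinom_gap_natCast_eq_succ n (by omega))
    (genBinom_gap_natCast_succ_nonneg n (by omega) (by omega)) (by linarith) (by linarith)
end

section
/- Let G be the edge set of a graph on n vertices with matching number ν(G) = s, where s ≥ 1, and with no isolated vertices. Then there exists an s-element vertex set R such that the number of edges of G disjoint from R is at most C(s+1, 2); moreover, if every s-element set R has at least C(s+1,2) edges of G disjoint from it (i.e., equality is attained in the minimum), then G is the edge set of a complete graph on 2s+1 vertices. -/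
/-!
Fix a maximum matching `M` with vertex set `V`, so `|V| = 2s` and every edge meets `V`.
Exchanging matching edges shows that the two ends of a matching edge cannot have distinct
neighbours outside `V`; hence each matching edge can be written `{c, d}` with `d` having at
most one neighbour outside `V`. Let `R` be the set of the `c`'s and `D` that of the `d`'s.
An edge avoiding `R` either lies inside `D` or joins some `d` to its only outer neighbour,
so at most `C(s, 2) + s = C(s + 1, 2)` edges avoid `R`.

If every `s`-set leaves at least `C(s + 1, 2)` edges, equality for `R` makes `D` a clique
and gives each `d` an outer neighbour `u`, which is then also the only possible outer
neighbour of its partner `c`; equality for `D` gives the edge `{c, u}`. Two matching edges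
with different outer vertices `u₁ ≠ u₂` could be replaced by `{c₁, u₁}`, `{c₂, u₂}`,
`{d₁, d₂}`, contradicting maximality. So there is a single outer vertex, the graph has
`2s + 1` vertices, and the hypothesis applied to the complement of any `(s + 1)`-set
containing a given pair makes that pair an edge.
-/

open Finset

/-- Matching number of a family: the largest number of pairwise disjoint
members. -/
noncomputable def matchingNumber (F : Finset (Finset ℕ)) : ℕ :=
  sSup {s | ∃ M ⊆ F, M.card = s ∧ (M : Set (Finset ℕ)).PairwiseDisjoint id}

section Pairs

variable {α : Type*} [DecidableEq α]

theorem Finset.eq_pair_of_card_eq_two {e : Finset α} {x y : α} (he : e.card = 2) (hx : x ∈ e)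
    (hy : y ∈ e) (hxy : x ≠ y) : e = {x, y} :=
  (eq_of_subset_of_card_le (insert_subset hx (singleton_subset_iff.2 hy))
    (by rw [he, card_pair hxy])).symm

theorem Finset.left_mem_of_eq_pair {m : Finset α} {a b : α} (h : m = {a, b}) : a ∈ m :=
  h ▸ mem_insert_self a {b}

theorem Finset.right_mem_of_eq_pair {m : Finset α} {a b : α} (h : m = {a, b}) : b ∈ m :=
  h ▸ mem_insert_of_mem (mem_singleton_self b)

theorem image_union_image_eq_biUnion {M : Finset (Finset α)} {c d : Finset α → α}
    (hcd : ∀ m ∈ M, m = {c m, d m}) :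
    M.image c ∪ M.image d = M.biUnion id := by
  ext x
  simp only [mem_union, mem_image, mem_biUnion, id]
  constructor
  · rintro (⟨m, hm, rfl⟩ | ⟨m, hm, rfl⟩)
    exacts [⟨m, hm, left_mem_of_eq_pair (hcd m hm)⟩,
      ⟨m, hm, right_mem_of_eq_pair (hcd m hm)⟩]
  · rintro ⟨m, hm, hx⟩
    rw [hcd m hm, mem_insert, mem_singleton] at hx
    rcases hx with rfl | rfl
    exacts [Or.inl ⟨m, hm, rfl⟩, Or.inr ⟨m, hm, rfl⟩]

theorem card_image_of_forall_mem {M : Finset (Finset α)} {f : Finset α → α}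
    (hM : (M : Set (Finset α)).PairwiseDisjoint id) (hf : ∀ m ∈ M, f m ∈ m) :
    (M.image f).card = M.card :=
  card_image_of_injOn fun m hm m' hm' h => hM.elim_finset hm hm' (f m) (hf m hm) (h ▸ hf m' hm')

theorem pairwiseDisjoint_pair_pair {a b c d : α} (h : [a, b, c, d].Nodup) :
    (({{a, b}, {c, d}} : Finset (Finset α)) : Set (Finset α)).PairwiseDisjoint id ∧
      ({{a, b}, {c, d}} : Finset (Finset α)).card = 2 := by
  simp only [List.nodup_cons, List.mem_cons, List.not_mem_nil] at h
  refine ⟨by simp [Set.pairwiseDisjoint_insert, disjoint_left]; grind, card_pair ?_⟩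
  exact ne_of_mem_of_not_mem' (mem_insert_self a _) (by simp; grind)

theorem pairwiseDisjoint_pair_pair_pair {a b c d e f : α}
    (h : [a, b, c, d, e, f].Nodup) :
    (({{a, b}, {c, d}, {e, f}} : Finset (Finset α)) : Set (Finset α)).PairwiseDisjoint id ∧
      ({{a, b}, {c, d}, {e, f}} : Finset (Finset α)).card = 3 := by
  simp only [List.nodup_cons, List.mem_cons, List.not_mem_nil] at h
  refine ⟨by simp [Set.pairwiseDisjoint_insert, disjoint_left]; grind, ?_⟩
  rw [card_insert_of_notMem,
    card_pair (ne_of_mem_of_not_mem' (mem_insert_self c _) (by simp; grind))]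
  simp only [mem_insert, mem_singleton, not_or]
  exact ⟨ne_of_mem_of_not_mem' (mem_insert_self a _) (by simp; grind),
    ne_of_mem_of_not_mem' (mem_insert_self a _) (by simp; grind)⟩

end Pairs

theorem Nat.choose_two_add_self (n : ℕ) : n.choose 2 + n = (n + 1).choose 2 := by
  rw [Nat.choose_succ_succ', Nat.choose_one_right, add_comm]

section EdgesAvoiding

variable {α : Type*} [DecidableEq α]

def edgesAvoiding (G : Finset (Finset α)) (R : Finset α) : Finset (Finset α) :=
  G.filter fun e => e ∩ R = ∅

theorem mem_edgesAvoiding {G : Finset (Finset α)} {R e : Finset α} :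
    e ∈ edgesAvoiding G R ↔ e ∈ G ∧ Disjoint e R := by
  rw [edgesAvoiding, mem_filter, disjoint_iff_inter_eq_empty]

def outerNeighbours (G : Finset (Finset α)) (V : Finset α) (x : α) : Set α :=
  {u | u ∉ V ∧ {x, u} ∈ G}

theorem eq_powersetCard_of_choose_le_card_edgesAvoiding {G : Finset (Finset α)} {W : Finset α}
    {k s t : ℕ} (hG : G ⊆ W.powersetCard t) (hW : W.card = k + s) (ht : t ≤ k)
    (h : ∀ R ⊆ W, R.card = s → k.choose t ≤ (edgesAvoiding G R).card) :
    G = W.powersetCard t := by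
  refine hG.antisymm fun p hp => ?_
  obtain ⟨hpW, hpt⟩ := mem_powersetCard.1 hp
  obtain ⟨S, hpS, hSW, hS⟩ := exists_subsuperset_card_eq hpW (hpt.trans_le ht) (by omega)
  have hR : (W \ S).card = s := by rw [card_sdiff_of_subset hSW]; omega
  have hsub : edgesAvoiding G (W \ S) ⊆ S.powersetCard t := fun e he => by
    obtain ⟨heG, hdisj⟩ := mem_edgesAvoiding.1 he
    obtain ⟨heW, het⟩ := mem_powersetCard.1 (hG heG)
    refine mem_powersetCard.2 ⟨fun x hx => ?_, het⟩
    by_contra hxS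
    exact disjoint_left.1 hdisj hx (mem_sdiff.2 ⟨heW hx, hxS⟩)
  have heq := eq_of_subset_of_card_le hsub
    (by rw [card_powersetCard, hS]; exact h _ sdiff_subset hR)
  exact (mem_edgesAvoiding.1 (heq ▸ mem_powersetCard.2 ⟨hpS, hpt⟩)).1

variable {G : Finset (Finset α)} {R D : Finset α}

theorem filter_edgesAvoiding_subset_powersetCard (hG2 : ∀ e ∈ G, e.card = 2) :
    (edgesAvoiding G R).filter (· ⊆ R ∪ D) ⊆ D.powersetCard 2 := fun e he => by
  obtain ⟨he, heRD⟩ := mem_filter.1 he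
  obtain ⟨heG, heR⟩ := mem_edgesAvoiding.1 he
  refine mem_powersetCard.2 ⟨fun x hx => ?_, hG2 e heG⟩
  exact (mem_union.1 (heRD hx)).resolve_left (disjoint_left.1 heR hx)

theorem exists_eq_pair_of_mem_filter_edgesAvoiding (hG2 : ∀ e ∈ G, e.card = 2)
    (hmeet : ∀ e ∈ G, ¬Disjoint e (R ∪ D)) {e : Finset α}
    (he : e ∈ (edgesAvoiding G R).filter (¬ · ⊆ R ∪ D)) :
    ∃ d ∈ D, ∃ u ∈ outerNeighbours G (R ∪ D) d, e = {d, u} ∧ e ∩ D = {d} := by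
  obtain ⟨he, heRD⟩ := mem_filter.1 he
  obtain ⟨heG, heR⟩ := mem_edgesAvoiding.1 he
  obtain ⟨d, hde, hdRD⟩ := not_disjoint_iff.1 (hmeet e heG)
  obtain ⟨u, hue, huRD⟩ := not_subset.1 heRD
  have hdD : d ∈ D := (mem_union.1 hdRD).resolve_left (disjoint_left.1 heR hde)
  obtain rfl := eq_pair_of_card_eq_two (hG2 e heG) hde hue (ne_of_mem_of_not_mem hdRD huRD)
  refine ⟨d, hdD, u, ⟨huRD, heG⟩, rfl, ?_⟩
  rw [insert_inter_of_mem hdD, singleton_inter_of_notMem fun h => huRD (mem_union_right R h)]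
  rfl

theorem injOn_inter_filter_edgesAvoiding (hG2 : ∀ e ∈ G, e.card = 2)
    (hmeet : ∀ e ∈ G, ¬Disjoint e (R ∪ D))
    (hD : ∀ d ∈ D, (outerNeighbours G (R ∪ D) d).Subsingleton) :
    Set.InjOn (· ∩ D) ((edgesAvoiding G R).filter (¬ · ⊆ R ∪ D) : Set (Finset α)) := by
  intro e he e' he' hee'
  obtain ⟨d, hd, u, hu, rfl, hdD⟩ := exists_eq_pair_of_mem_filter_edgesAvoiding hG2 hmeet he
  obtain ⟨d', -, u', hu', rfl, hd'D⟩ := exists_eq_pair_of_mem_filter_edgesAvoiding hG2 hmeet he'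
  obtain rfl : d = d' := singleton_injective (hdD.symm.trans (hee'.trans hd'D))
  rw [hD d hd hu hu']

theorem mapsTo_inter_filter_edgesAvoiding (hG2 : ∀ e ∈ G, e.card = 2)
    (hmeet : ∀ e ∈ G, ¬Disjoint e (R ∪ D)) :
    Set.MapsTo (· ∩ D) ((edgesAvoiding G R).filter (¬ · ⊆ R ∪ D) : Set (Finset α))
      (D.powersetCard 1 : Set (Finset α)) := fun e he => by
  obtain ⟨d, hd, -, -, -, hdD⟩ := exists_eq_pair_of_mem_filter_edgesAvoiding hG2 hmeet he
  simp only [mem_coe, hdD, mem_powersetCard]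
  exact ⟨singleton_subset_iff.2 hd, card_singleton d⟩

theorem card_edgesAvoiding_le (hG2 : ∀ e ∈ G, e.card = 2)
    (hmeet : ∀ e ∈ G, ¬Disjoint e (R ∪ D))
    (hD : ∀ d ∈ D, (outerNeighbours G (R ∪ D) d).Subsingleton) :
    (edgesAvoiding G R).card ≤ D.card.choose 2 + D.card := by
  rw [← card_filter_add_card_filter_not (· ⊆ R ∪ D)]
  have hin := card_le_card (filter_edgesAvoiding_subset_powersetCard (R := R) (D := D) hG2)
  have hout := card_le_card_of_injOn _ (mapsTo_inter_filter_edgesAvoiding hG2 hmeet)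
    (injOn_inter_filter_edgesAvoiding hG2 hmeet hD)
  rw [card_powersetCard] at hin
  rw [card_powersetCard, Nat.choose_one_right] at hout
  omega

theorem powersetCard_subset_and_nonempty_of_le_card_edgesAvoiding (hG2 : ∀ e ∈ G, e.card = 2)
    (hmeet : ∀ e ∈ G, ¬Disjoint e (R ∪ D))
    (hD : ∀ d ∈ D, (outerNeighbours G (R ∪ D) d).Subsingleton)
    (h : D.card.choose 2 + D.card ≤ (edgesAvoiding G R).card) :
    D.powersetCard 2 ⊆ G ∧ ∀ d ∈ D, (outerNeighbours G (R ∪ D) d).Nonempty := by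
  rw [← card_filter_add_card_filter_not (· ⊆ R ∪ D)] at h
  have hsub := filter_edgesAvoiding_subset_powersetCard (R := R) (D := D) hG2
  have hinj := injOn_inter_filter_edgesAvoiding hG2 hmeet hD
  have hin := card_le_card hsub
  have hout := card_le_card_of_injOn _ (mapsTo_inter_filter_edgesAvoiding hG2 hmeet) hinj
  rw [card_powersetCard] at hin
  rw [card_powersetCard, Nat.choose_one_right] at hout
  constructor
  · rw [← eq_of_subset_of_card_le hsub (by rw [card_powersetCard]; omega)]
    exact fun e he => (mem_edgesAvoiding.1 (mem_filter.1 he).1).1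
  · intro d hd
    obtain ⟨e, he, hde⟩ := surj_on_of_inj_on_of_card_le (fun e _ => e ∩ D)
      (fun e he => mapsTo_inter_filter_edgesAvoiding hG2 hmeet he)
      (fun e e' he he' hee' => hinj he he' hee')
      (by rw [card_powersetCard, Nat.choose_one_right]; omega) {d}
      (mem_powersetCard.2 ⟨singleton_subset_iff.2 hd, card_singleton d⟩)
    obtain ⟨d', -, u, hu, rfl, hd'D⟩ := exists_eq_pair_of_mem_filter_edgesAvoiding hG2 hmeet he
    obtain rfl : d = d' := singleton_injective (hde.trans hd'D)
    exact ⟨u, hu⟩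

end EdgesAvoiding

structure IsMaximumMatching (G M : Finset (Finset ℕ)) : Prop where
  subset : M ⊆ G
  pairwiseDisjoint : (M : Set (Finset ℕ)).PairwiseDisjoint id
  card_eq : M.card = matchingNumber G

theorem bddAbove_matchingSizes (G : Finset (Finset ℕ)) :
    BddAbove {s | ∃ M ⊆ G, M.card = s ∧ (M : Set (Finset ℕ)).PairwiseDisjoint id} :=
  ⟨G.card, fun _ ⟨_, hM, hs, _⟩ => hs ▸ card_le_card hM⟩

theorem card_le_matchingNumber {G M : Finset (Finset ℕ)} (hMG : M ⊆ G)
    (hM : (M : Set (Finset ℕ)).PairwiseDisjoint id) : M.card ≤ matchingNumber G :=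
  le_csSup (bddAbove_matchingSizes G) ⟨M, hMG, rfl, hM⟩

theorem exists_isMaximumMatching (G : Finset (Finset ℕ)) : ∃ M, IsMaximumMatching G M := by
  obtain ⟨M, hMG, hcard, hM⟩ : matchingNumber G ∈ _ :=
    Nat.sSup_mem ⟨0, ∅, empty_subset G, rfl, by simp⟩ (bddAbove_matchingSizes G)
  exact ⟨M, hMG, hM, hcard⟩

namespace IsMaximumMatching

variable {G M : Finset (Finset ℕ)} {c d : Finset ℕ → ℕ}

theorem notMem_of_mem_of_ne (hM : IsMaximumMatching G M) {m m' : Finset ℕ} (hm : m ∈ M)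
    (hm' : m' ∈ M) (hne : m ≠ m') {x : ℕ} (hx : x ∈ m) : x ∉ m' := fun hx' =>
  hne (hM.pairwiseDisjoint.elim_finset hm hm' x hx hx')

theorem card_le_of_exchange (hM : IsMaximumMatching G M) {T P : Finset (Finset ℕ)}
    (hT : T ⊆ M) (hPG : P ⊆ G) (hP : (P : Set (Finset ℕ)).PairwiseDisjoint id)
    (hPne : ∀ p ∈ P, p.Nonempty)
    (hPV : ∀ p ∈ P, ∀ x ∈ p, x ∈ T.biUnion id ∨ x ∉ M.biUnion id) : P.card ≤ T.card := by
  have hPM : ∀ p ∈ P, ∀ m ∈ M \ T, Disjoint p m := by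
    refine fun p hp m hm => disjoint_left.2 fun x hxp hxm => ?_
    obtain ⟨hmM, hmT⟩ := mem_sdiff.1 hm
    rcases hPV p hp x hxp with hxT | hxV
    · obtain ⟨t, htT, hxt⟩ := mem_biUnion.1 hxT
      exact hM.notMem_of_mem_of_ne (hT htT) hmM (ne_of_mem_of_not_mem htT hmT) hxt hxm
    · exact hxV (mem_biUnion.2 ⟨m, hmM, hxm⟩)
  have hdisj : Disjoint (M \ T) P := disjoint_left.2 fun p hpM hpP =>
    (hPne p hpP).ne_empty (disjoint_self.1 (hPM p hpP p hpM))
  have hpd : ((M \ T ∪ P : Finset (Finset ℕ)) : Set (Finset ℕ)).PairwiseDisjoint id := by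
    rw [coe_union, Set.pairwiseDisjoint_union]
    exact ⟨hM.pairwiseDisjoint.subset (by simp), hP, fun m hm p hp _ => (hPM p hp m hm).symm⟩
  have := card_le_matchingNumber (union_subset (sdiff_subset.trans hM.subset) hPG) hpd
  rw [card_union_of_disjoint hdisj, card_sdiff_of_subset hT, ← hM.card_eq] at this
  have := card_le_card hT
  omega

theorem not_disjoint_biUnion (hM : IsMaximumMatching G M) {e : Finset ℕ} (he : e ∈ G)
    (hne : e.Nonempty) : ¬Disjoint e (M.biUnion id) := fun hdisj => by
  have := hM.card_le_of_exchange (empty_subset M) (singleton_subset_iff.2 he) (by simp)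
    (by simpa using hne)
    (fun p hp x hx => Or.inr (disjoint_left.1 (mem_singleton.1 hp ▸ hdisj) hx))
  simp at this

theorem eq_of_mem_outerNeighbours (hM : IsMaximumMatching G M) {m : Finset ℕ} (hm : m ∈ M)
    {x y u v : ℕ} (hmxy : m = {x, y}) (hxy : x ≠ y)
    (hu : u ∈ outerNeighbours G (M.biUnion id) x)
    (hv : v ∈ outerNeighbours G (M.biUnion id) y) :
    u = v := by
  by_contra huv
  have hT : ∀ z ∈ m, z ∈ ({m} : Finset (Finset ℕ)).biUnion id := by simp
  have hx : x ∈ M.biUnion id := mem_biUnion.2 ⟨m, hm, by simp [hmxy]⟩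
  have hy : y ∈ M.biUnion id := mem_biUnion.2 ⟨m, hm, by simp [hmxy]⟩
  obtain ⟨hP, hPcard⟩ := pairwiseDisjoint_pair_pair (a := x) (b := u) (c := y) (d := v) (by
    simp [hxy, huv, ne_of_mem_of_not_mem hx hu.1, ne_of_mem_of_not_mem hx hv.1,
      (ne_of_mem_of_not_mem hy hu.1).symm, ne_of_mem_of_not_mem hy hv.1])
  have := hM.card_le_of_exchange (singleton_subset_iff.2 hm)
    (insert_subset hu.2 (singleton_subset_iff.2 hv.2)) hP (by simp) (fun p hp z hz => by
      simp only [mem_insert, mem_singleton] at hp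
      rcases hp with rfl | rfl <;> simp only [mem_insert, mem_singleton] at hz <;>
        rcases hz with rfl | rfl
      exacts [Or.inl (hT _ (by simp [hmxy])), Or.inr hu.1, Or.inl (hT _ (by simp [hmxy])),
        Or.inr hv.1])
  rw [hPcard, card_singleton] at this
  omega

theorem eq_of_mem_outerNeighbours_of_mem_pair (hM : IsMaximumMatching G M) {m₁ m₂ : Finset ℕ}
    (hm₁ : m₁ ∈ M) (hm₂ : m₂ ∈ M) (hne : m₁ ≠ m₂) {c₁ d₁ c₂ d₂ u₁ u₂ : ℕ}
    (h₁ : m₁ = {c₁, d₁}) (h₂ : m₂ = {c₂, d₂}) (hcd₁ : c₁ ≠ d₁) (hcd₂ : c₂ ≠ d₂)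
    (hu₁ : u₁ ∈ outerNeighbours G (M.biUnion id) c₁)
    (hu₂ : u₂ ∈ outerNeighbours G (M.biUnion id) c₂) (hd : {d₁, d₂} ∈ G) : u₁ = u₂ := by
  by_contra hu
  have hT : ∀ z ∈ m₁ ∪ m₂, z ∈ ({m₁, m₂} : Finset (Finset ℕ)).biUnion id := by simp
  have hV : ∀ z ∈ m₁ ∪ m₂, z ∈ M.biUnion id := fun z hz => by
    rcases mem_union.1 hz with hz | hz
    exacts [mem_biUnion.2 ⟨m₁, hm₁, hz⟩, mem_biUnion.2 ⟨m₂, hm₂, hz⟩]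
  have hc₁ : c₁ ∉ m₂ := hM.notMem_of_mem_of_ne hm₁ hm₂ hne (by simp [h₁])
  have hd₁ : d₁ ∉ m₂ := hM.notMem_of_mem_of_ne hm₁ hm₂ hne (by simp [h₁])
  have hc₁V := hV c₁ (by simp [h₁])
  have hd₁V := hV d₁ (by simp [h₁])
  have hc₂V := hV c₂ (by simp [h₂])
  have hd₂V := hV d₂ (by simp [h₂])
  have hu₁V := hu₁.1
  have hu₂V := hu₂.1
  rw [h₂] at hc₁ hd₁
  obtain ⟨hP, hPcard⟩ := pairwiseDisjoint_pair_pair_pair (a := c₁) (b := u₁) (c := c₂)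
    (d := u₂) (e := d₁) (f := d₂) (by
      simp only [List.nodup_cons, List.mem_cons, List.not_mem_nil]
      grind)
  have := hM.card_le_of_exchange (insert_subset hm₁ (singleton_subset_iff.2 hm₂))
    (insert_subset hu₁.2 (insert_subset hu₂.2 (singleton_subset_iff.2 hd))) hP (by simp)
    (fun p hp z hz => by
      simp only [mem_insert, mem_singleton] at hp
      rcases hp with rfl | rfl | rfl <;> simp only [mem_insert, mem_singleton] at hz <;>
        rcases hz with rfl | rfl
      exacts [Or.inl (hT _ (by simp [h₁])), Or.inr hu₁V, Or.inl (hT _ (by simp [h₂])),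
        Or.inr hu₂V, Or.inl (hT _ (by simp [h₁])), Or.inl (hT _ (by simp [h₂]))])
  rw [hPcard, card_pair hne] at this
  omega

theorem exists_eq_pair_outerNeighbours_subsingleton (hM : IsMaximumMatching G M)
    (hG2 : ∀ e ∈ G, e.card = 2) :
    ∃ c d : Finset ℕ → ℕ, ∀ m ∈ M, m = {c m, d m} ∧ c m ≠ d m ∧
      (outerNeighbours G (M.biUnion id) (d m)).Subsingleton := by
  have : ∀ m ∈ M, ∃ c d : ℕ, m = {c, d} ∧ c ≠ d ∧
      (outerNeighbours G (M.biUnion id) d).Subsingleton := fun m hm => by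
    obtain ⟨x, y, hxy, rfl⟩ := card_eq_two.1 (hG2 _ (hM.subset hm))
    by_cases hy : (outerNeighbours G (M.biUnion id) y).Subsingleton
    · exact ⟨x, y, rfl, hxy, hy⟩
    · -- two distinct outer neighbours of `y` leave none for `x`
      obtain ⟨u, hu, v, hv, huv⟩ := Set.not_subsingleton_iff.1 hy
      refine ⟨y, x, pair_comm x y, hxy.symm, fun w hw _ _ => absurd ?_ huv⟩
      exact (hM.eq_of_mem_outerNeighbours hm rfl hxy hw hu).symm.trans
        (hM.eq_of_mem_outerNeighbours hm rfl hxy hw hv)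
  choose! c d hcd using this
  exact ⟨c, d, hcd⟩

theorem card_image_eq (hM : IsMaximumMatching G M) (hcd : ∀ m ∈ M, m = {c m, d m}) :
    (M.image c).card = M.card ∧ (M.image d).card = M.card :=
  ⟨card_image_of_forall_mem hM.pairwiseDisjoint fun m hm => left_mem_of_eq_pair (hcd m hm),
    card_image_of_forall_mem hM.pairwiseDisjoint fun m hm => right_mem_of_eq_pair (hcd m hm)⟩

theorem not_disjoint_image_union_image (hM : IsMaximumMatching G M)
    (hG2 : ∀ e ∈ G, e.card = 2) (hcd : ∀ m ∈ M, m = {c m, d m}) {e : Finset ℕ}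
    (he : e ∈ G) :
    ¬Disjoint e (M.image c ∪ M.image d) := by
  rw [image_union_image_eq_biUnion hcd]
  exact hM.not_disjoint_biUnion he (card_pos.1 (by rw [hG2 e he]; norm_num))

theorem card_edgesAvoiding_image_le (hM : IsMaximumMatching G M)
    (hG2 : ∀ e ∈ G, e.card = 2)
    (hcd : ∀ m ∈ M, m = {c m, d m} ∧ c m ≠ d m ∧
      (outerNeighbours G (M.biUnion id) (d m)).Subsingleton) :
    (edgesAvoiding G (M.image c)).card ≤ (M.card + 1).choose 2 := by
  have hunion := image_union_image_eq_biUnion fun m hm => (hcd m hm).1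
  have := card_edgesAvoiding_le hG2
    (fun e he => hM.not_disjoint_image_union_image hG2 (fun m hm => (hcd m hm).1) he)
    (fun x hx => by
      obtain ⟨m, hm, rfl⟩ := mem_image.1 hx
      exact hunion ▸ (hcd m hm).2.2)
  rwa [(hM.card_image_eq fun m hm => (hcd m hm).1).2, Nat.choose_two_add_self] at this

theorem exists_outerNeighbours_eq_singleton (hM : IsMaximumMatching G M)
    (hG2 : ∀ e ∈ G, e.card = 2)
    (hcd : ∀ m ∈ M, m = {c m, d m} ∧ c m ≠ d m ∧
      (outerNeighbours G (M.biUnion id) (d m)).Subsingleton)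
    (hc : (M.card + 1).choose 2 ≤ (edgesAvoiding G (M.image c)).card)
    (hd : (M.card + 1).choose 2 ≤ (edgesAvoiding G (M.image d)).card) :
    (M.image d).powersetCard 2 ⊆ G ∧ ∀ m ∈ M, ∃ u,
      outerNeighbours G (M.biUnion id) (c m) = {u} ∧
        outerNeighbours G (M.biUnion id) (d m) = {u} := by
  have hpair : ∀ m ∈ M, m = {c m, d m} := fun m hm => (hcd m hm).1
  have hunion := image_union_image_eq_biUnion hpair
  obtain ⟨hcard_c, hcard_d⟩ := hM.card_image_eq hpair
  obtain ⟨hclique, hd_ne⟩ := powersetCard_subset_and_nonempty_of_le_card_edgesAvoiding hG2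
    (fun e he => hM.not_disjoint_image_union_image hG2 hpair he)
    (fun x hx => by
      obtain ⟨m, hm, rfl⟩ := mem_image.1 hx
      exact hunion ▸ (hcd m hm).2.2)
    (by rwa [hcard_d, Nat.choose_two_add_self])
  rw [hunion] at hd_ne
  have hcd_eq : ∀ m ∈ M, ∀ v ∈ outerNeighbours G (M.biUnion id) (c m),
      ∀ u ∈ outerNeighbours G (M.biUnion id) (d m), v = u := fun m hm v hv u hu =>
    hM.eq_of_mem_outerNeighbours hm (hpair m hm) (hcd m hm).2.1 hv hu
  have hc_sub : ∀ m ∈ M, (outerNeighbours G (M.biUnion id) (c m)).Subsingleton := fun m hm => by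
    obtain ⟨u, hu⟩ := hd_ne (d m) (mem_image_of_mem d hm)
    exact fun v hv v' hv' => (hcd_eq m hm v hv u hu).trans (hcd_eq m hm v' hv' u hu).symm
  obtain ⟨-, hc_ne⟩ :=
    powersetCard_subset_and_nonempty_of_le_card_edgesAvoiding (R := M.image d) hG2
    (fun e he => union_comm (M.image c) _ ▸ hM.not_disjoint_image_union_image hG2 hpair he)
    (fun x hx => by
      obtain ⟨m, hm, rfl⟩ := mem_image.1 hx
      exact union_comm (M.image c) _ ▸ hunion ▸ hc_sub m hm)
    (by rwa [hcard_c, Nat.choose_two_add_self])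
  rw [union_comm, hunion] at hc_ne
  refine ⟨hclique, fun m hm => ?_⟩
  obtain ⟨u, hu⟩ := hd_ne (d m) (mem_image_of_mem d hm)
  obtain ⟨v, hv⟩ := hc_ne (c m) (mem_image_of_mem c hm)
  obtain rfl := hcd_eq m hm v hv u hu
  exact ⟨v, (hc_sub m hm).eq_singleton_of_mem hv, (hcd m hm).2.2.eq_singleton_of_mem hu⟩

theorem exists_forall_outerNeighbours_eq (hM : IsMaximumMatching G M)
    (hG2 : ∀ e ∈ G, e.card = 2)
    (hcd : ∀ m ∈ M, m = {c m, d m} ∧ c m ≠ d m ∧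
      (outerNeighbours G (M.biUnion id) (d m)).Subsingleton) (hMne : M.Nonempty)
    (hc : (M.card + 1).choose 2 ≤ (edgesAvoiding G (M.image c)).card)
    (hd : (M.card + 1).choose 2 ≤ (edgesAvoiding G (M.image d)).card) :
    ∃ w ∉ M.biUnion id, ∀ x ∈ M.biUnion id, outerNeighbours G (M.biUnion id) x = {w} := by
  obtain ⟨hclique, hpend⟩ := hM.exists_outerNeighbours_eq_singleton hG2 hcd hc hd
  obtain ⟨m₀, hm₀⟩ := hMne
  obtain ⟨w, hw, -⟩ := hpend m₀ hm₀
  refine ⟨w, (hw ▸ rfl : w ∈ outerNeighbours G _ (c m₀)).1, fun x hx => ?_⟩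
  obtain ⟨m, hm, hxm⟩ := mem_biUnion.1 hx
  obtain ⟨u, hu_c, hu_d⟩ := hpend m hm
  obtain rfl : u = w := by
    by_cases hmm₀ : m = m₀
    · subst hmm₀
      exact Set.singleton_injective (hu_c.symm.trans hw)
    · have hdd : d m ≠ d m₀ := fun h => hM.notMem_of_mem_of_ne hm hm₀ hmm₀
        (right_mem_of_eq_pair (hcd m hm).1) (h ▸ right_mem_of_eq_pair (hcd m₀ hm₀).1)
      refine hM.eq_of_mem_outerNeighbours_of_mem_pair hm hm₀ hmm₀ (hcd m hm).1
        (hcd m₀ hm₀).1 (hcd m hm).2.1 (hcd m₀ hm₀).2.1 (hu_c ▸ rfl) (hw ▸ rfl) (hclique ?_)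
      refine mem_powersetCard.2 ⟨insert_subset ?_ (singleton_subset_iff.2 ?_), card_pair hdd⟩
      exacts [mem_image_of_mem d hm, mem_image_of_mem d hm₀]
  rw [id, (hcd m hm).1, mem_insert, mem_singleton] at hxm
  rcases hxm with rfl | rfl
  exacts [hu_c, hu_d]

theorem card_biUnion_id (hM : IsMaximumMatching G M) (hG2 : ∀ e ∈ G, e.card = 2) :
    (M.biUnion id).card = 2 * M.card := by
  rw [card_biUnion hM.pairwiseDisjoint, sum_congr rfl fun m hm => hG2 (id m) (hM.subset hm),
    sum_const, smul_eq_mul, mul_comm]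

theorem eq_insert_biUnion_of_outerNeighbours_eq (hM : IsMaximumMatching G M) {W : Finset ℕ}
    (hGW : G ⊆ W.powersetCard 2) (hiso : ∀ v ∈ W, ∃ e ∈ G, v ∈ e) (hMne : M.Nonempty)
    {w : ℕ} (hw : ∀ x ∈ M.biUnion id, outerNeighbours G (M.biUnion id) x = {w}) :
    W = insert w (M.biUnion id) := by
  have hG2 : ∀ e ∈ G, e.card = 2 := fun e he => (mem_powersetCard.1 (hGW he)).2
  refine Subset.antisymm (fun v hvW => ?_) (insert_subset ?_ ?_)
  · by_cases hv : v ∈ M.biUnion id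
    · exact mem_insert_of_mem hv
    obtain ⟨e, he, hve⟩ := hiso v hvW
    obtain ⟨x, hxe, hx⟩ := not_disjoint_iff.1
      (hM.not_disjoint_biUnion he (card_pos.1 (by rw [hG2 e he]; norm_num)))
    have hvx : v ∈ outerNeighbours G (M.biUnion id) x :=
      ⟨hv, eq_pair_of_card_eq_two (hG2 e he) hxe hve (ne_of_mem_of_not_mem hx hv) ▸ he⟩
    rw [hw x hx] at hvx
    exact hvx ▸ mem_insert_self v _
  · obtain ⟨m, hm⟩ := hMne
    obtain ⟨x, hx⟩ := card_pos.1 (by rw [hG2 m (hM.subset hm)]; norm_num)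
    have hwx : w ∈ outerNeighbours G (M.biUnion id) x := by
      rw [hw x (mem_biUnion.2 ⟨m, hm, hx⟩)]; rfl
    exact (mem_powersetCard.1 (hGW hwx.2)).1 (mem_insert_of_mem (mem_singleton_self w))
  · exact biUnion_subset.2 fun m hm => (mem_powersetCard.1 (hGW (hM.subset hm))).1

end IsMaximumMatching

theorem stmt_18 (n s : ℕ) (hs : 1 ≤ s)
    (G : Finset (Finset ℕ)) (hG : G ⊆ (Finset.Icc 1 n).powersetCard 2)
    (hν : matchingNumber G = s)
    (hiso : ∀ v ∈ Finset.Icc 1 n, ∃ e ∈ G, v ∈ e) :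
    (∃ R ⊆ Finset.Icc 1 n, R.card = s ∧
        (G.filter fun e => e ∩ R = ∅).card ≤ (s + 1).choose 2) ∧
    ((∀ R ⊆ Finset.Icc 1 n, R.card = s →
        (s + 1).choose 2 ≤ (G.filter fun e => e ∩ R = ∅).card) →
      ∃ W : Finset ℕ, W.card = 2 * s + 1 ∧ G = W.powersetCard 2) := by
  have hG2 : ∀ e ∈ G, e.card = 2 := fun e he => (mem_powersetCard.1 (hG he)).2
  obtain ⟨M, hM⟩ := exists_isMaximumMatching G
  have hMs : M.card = s := hM.card_eq.trans hν
  obtain ⟨c, d, hcd⟩ := hM.exists_eq_pair_outerNeighbours_subsingleton hG2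
  have hpair : ∀ m ∈ M, m = {c m, d m} := fun m hm => (hcd m hm).1
  have hVW : M.biUnion id ⊆ Icc 1 n :=
    biUnion_subset.2 fun m hm => (mem_powersetCard.1 (hG (hM.subset hm))).1
  have hcW : M.image c ⊆ Icc 1 n :=
    (subset_union_left.trans (image_union_image_eq_biUnion hpair).subset).trans hVW
  have hdW : M.image d ⊆ Icc 1 n :=
    (subset_union_right.trans (image_union_image_eq_biUnion hpair).subset).trans hVW
  obtain ⟨hc, hd⟩ := hM.card_image_eq hpair
  refine ⟨⟨M.image c, hcW, hc.trans hMs, hMs ▸ hM.card_edgesAvoiding_image_le hG2 hcd⟩,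
    fun H => ?_⟩
  obtain ⟨w, hwV, hw⟩ := hM.exists_forall_outerNeighbours_eq hG2 hcd (card_pos.1 (by omega))
    (hMs ▸ H _ hcW (hc.trans hMs)) (hMs ▸ H _ hdW (hd.trans hMs))
  have hW := hM.eq_insert_biUnion_of_outerNeighbours_eq hG hiso (card_pos.1 (by omega)) hw
  have hcard : (Icc 1 n).card = s + 1 + s := by
    rw [hW, card_insert_of_notMem hwV, hM.card_biUnion_id hG2, hMs]
    ring
  exact ⟨Icc 1 n, by omega,
    eq_powersetCard_of_choose_le_card_edgesAvoiding hG hcard (by omega) H⟩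
end
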